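/- arXiv:1512.01821 — 3 statements merged into one kernel-verified Lean document; each statement's English description precedes it below -/
import Mathlib

section
/- Let G be a graph whose maximum edge e (in a fixed total edge order) is neither an isthmus nor a loop, and let O be a fourientation of G in which e is bioriented. Then L^o(O) = L^o(O/e) and L^b(O) = L^b(O/e), and also I^o(O) = I^o(O/e) and I^u(O) = I^u(O/e). -/
open scoped Classical

/-- A multigraph with a fixed reference orientation: each edge `e` has a
source `src e` and a target `tgt e` (the positive direction `e⁺ = (src e, tgt e)`). -/
structure RefGraph (V E : Type) where
  src : E → V
  tgt : E → V

namespace RefGraph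

variable {V E : Type} (G : RefGraph V E)

/-- Two vertices are joined by some edge of `S`. -/
def step (S : Set E) (a b : V) : Prop :=
  ∃ e ∈ S, (G.src e = a ∧ G.tgt e = b) ∨ (G.src e = b ∧ G.tgt e = a)

/-- `κ(S)`: the number of connected components of the spanning subgraph `(V, S)`. -/
noncomputable def kappa (S : Set E) : ℕ :=
  Nat.card (Quot (G.step S))

/-- A cut of `G`: a minimal nonempty edge set whose removal increases the
number of connected components. -/
def IsCut (C : Set E) : Prop :=
  C.Nonempty ∧ G.kappa Cᶜ > G.kappa Set.univ ∧
    ∀ C' : Set E, C' ⊂ C → C'.Nonempty → ¬ (G.kappa C'ᶜ > G.kappa Set.univ)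

/-- A cycle of `G`: a minimal nonempty edge set meeting no cut of `G` in
precisely one element. -/
def IsCycle (C : Set E) : Prop :=
  C.Nonempty ∧ (∀ Cu : Set E, G.IsCut Cu → (Cu ∩ C).ncard ≠ 1) ∧
    ∀ C' : Set E, C' ⊂ C → C'.Nonempty →
      ¬ (∀ Cu : Set E, G.IsCut Cu → (Cu ∩ C').ncard ≠ 1)

/-- Head of edge `e` under orientation `O` (`O e = true` means the reference
direction `src e → tgt e`). -/
def ohead (O : E → Bool) (e : E) : V := if O e then G.tgt e else G.src e

/-- Tail of edge `e` under orientation `O`. -/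
def otail (O : E → Bool) (e : E) : V := if O e then G.src e else G.tgt e

/-- Edge `e` crosses the vertex set `U` (exactly one endpoint in `U`). -/
def crossing (U : Set V) (e : E) : Prop := G.src e ∈ U ↔ G.tgt e ∉ U

/-- A directed cut of the orientation `O`: a cut all of whose edges are
oriented consistently out of some vertex set `U`. -/
def IsDirCut (O : E → Bool) (C : Set E) : Prop :=
  G.IsCut C ∧ ∃ U : Set V, (∀ e, e ∈ C ↔ G.crossing U e) ∧ ∀ e ∈ C, G.otail O e ∈ U

/-- A directed cycle of the orientation `O`: a cycle oriented consistently,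
i.e. in-degree equals out-degree at each vertex within the cycle. -/
def IsDirCycle (O : E → Bool) (C : Set E) : Prop :=
  G.IsCycle C ∧ ∀ v : V,
    {e ∈ C | G.ohead O e = v}.ncard = {e ∈ C | G.otail O e = v}.ncard

section Activities

variable [LinearOrder E]

/-- `Î(S)`: cut active edges of the spanning subgraph `S`. -/
def Iact (S : Set E) : Set E :=
  {e | ∃ C : Set E, G.IsCut C ∧ e ∈ C ∧ (∀ f ∈ C, f ≠ e → f ∉ S) ∧ ∀ f ∈ C, e ≤ f}

/-- `L̂(S)`: cycle active edges of the spanning subgraph `S`. -/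
def Lact (S : Set E) : Set E :=
  {e | ∃ C : Set E, G.IsCycle C ∧ e ∈ C ∧ (∀ f ∈ C, f = e ∨ f ∈ S) ∧ ∀ f ∈ C, e ≤ f}

/-- `I(O)`: cut active edges of the orientation `O`. -/
def Ior (O : E → Bool) : Set E :=
  {e | ∃ C : Set E, G.IsDirCut O C ∧ e ∈ C ∧ ∀ f ∈ C, e ≤ f}

/-- `L(O)`: cycle active edges of the orientation `O`. -/
def Lor (O : E → Bool) : Set E :=
  {e | ∃ C : Set E, G.IsDirCycle O C ∧ e ∈ C ∧ ∀ f ∈ C, e ≤ f}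

end Activities

/-- The Tutte polynomial via the corank-nullity expansion, evaluated in a
commutative ring. -/
noncomputable def tutte [Fintype V] [Fintype E] (R : Type) [CommRing R] (x y : R) : R :=
  ∑ S : Finset E, (x - 1) ^ (G.kappa ↑S - G.kappa Set.univ) *
    (y - 1) ^ (S.card + G.kappa ↑S - Fintype.card V)

/-! ### Fourientations.
A fourientation is `F : E → Bool × Bool`, recording whether `e⁺` resp. `e⁻`
belongs to the fourientation. -/

/-- A potential cut of the fourientation `F`: a directed cut each of whose
edges is unoriented in `F` or oriented in the cut direction (out of `U`). -/
def PotCut (F : E → Bool × Bool) (C : Set E) : Prop :=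
  G.IsCut C ∧ ∃ U : Set V, (∀ e, e ∈ C ↔ G.crossing U e) ∧
    ∀ e ∈ C, (G.src e ∈ U → (F e).2 = false) ∧ (G.src e ∉ U → (F e).1 = false)

/-- A potential cycle of the fourientation `F`, with cyclic direction `dir`:
a consistently directed cycle each of whose edges has its `dir`-direction
present in `F` (so each edge is bioriented or oriented in the cycle direction). -/
def PotCycle (F : E → Bool × Bool) (C : Set E) (dir : E → Bool) : Prop :=
  G.IsCycle C ∧
    (∀ v : V, {e ∈ C | G.ohead dir e = v}.ncard = {e ∈ C | G.otail dir e = v}.ncard) ∧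
    ∀ e ∈ C, (if dir e then (F e).1 else (F e).2) = true

/-- Add the direction `d` of edge `e` to the fourientation `F`. -/
def addDir [DecidableEq E] (F : E → Bool × Bool) (e : E) (d : Bool) : E → Bool × Bool :=
  Function.update F e (if d then (true, (F e).2) else ((F e).1, true))

/-- Remove the direction `d` of edge `e` from the fourientation `F`. -/
def remDir [DecidableEq E] (F : E → Bool × Bool) (e : E) (d : Bool) : E → Bool × Bool :=
  Function.update F e (if d then (false, (F e).2) else ((F e).1, false))

/-- `ᵉO`: toggle the status of the edge `e` in the fourientation `F`. -/
def toggle [DecidableEq E] (F : E → Bool × Bool) (e : E) : E → Bool × Bool :=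
  Function.update F e ((F e).2, (F e).1)

section FourActivities

variable [LinearOrder E]

/-- `I^o(O)`: oriented edges that are minimal in some potential cut. -/
def Io (F : E → Bool × Bool) : Set E :=
  {f | (F f).1 ≠ (F f).2 ∧ ∃ C : Set E, G.PotCut F C ∧ f ∈ C ∧ ∀ g ∈ C, f ≤ g}

/-- `L^o(O)`: oriented edges that are minimal in some potential cycle. -/
def Lo (F : E → Bool × Bool) : Set E :=
  {f | (F f).1 ≠ (F f).2 ∧
    ∃ (C : Set E) (dir : E → Bool), G.PotCycle F C dir ∧ f ∈ C ∧ ∀ g ∈ C, f ≤ g}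

/-- `I^u(O)`: unoriented edges `f` minimal in some potential cut of
`O ∪ {f^{σᵤ(f)}}`. -/
def Iu (σu : E → Bool) (F : E → Bool × Bool) : Set E :=
  {f | F f = (false, false) ∧
    ∃ C : Set E, G.PotCut (addDir F f (σu f)) C ∧ f ∈ C ∧ ∀ g ∈ C, f ≤ g}

/-- `L^b(O)`: bioriented edges `f` minimal in some potential cycle of
`O \ {f^{σ_b(f)}}`. -/
def Lb (σb : E → Bool) (F : E → Bool × Bool) : Set E :=
  {f | F f = (true, true) ∧
    ∃ (C : Set E) (dir : E → Bool),
      G.PotCycle (remDir F f (σb f)) C dir ∧ f ∈ C ∧ ∀ g ∈ C, f ≤ g}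

end FourActivities

/-- The deletion `G − e`. -/
def del (e : E) : RefGraph V {f : E // f ≠ e} :=
  ⟨fun f => G.src f.1, fun f => G.tgt f.1⟩

/-- The contraction `G/e`: identify the endpoints of `e` and remove `e`. -/
def contr (e : E) : RefGraph (Quot (fun a b => a = G.src e ∧ b = G.tgt e)) {f : E // f ≠ e} :=
  ⟨fun f => Quot.mk _ (G.src f.1), fun f => Quot.mk _ (G.tgt f.1)⟩

/-! ### Potential walks in a fourientation. A walk step is a pair `(e, d)` of an
edge and a chosen direction (`d = true` for the reference direction). -/

/-- Tail of the directed edge `(e, d)`. -/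
def ftail (p : E × Bool) : V := if p.2 then G.src p.1 else G.tgt p.1

/-- Head of the directed edge `(e, d)`. -/
def fhead (p : E × Bool) : V := if p.2 then G.tgt p.1 else G.src p.1

/-- The direction `d` of `e` is present in the fourientation `F`. -/
def present (F : E → Bool × Bool) (p : E × Bool) : Prop :=
  (if p.2 then (F p.1).1 else (F p.1).2) = true

/-- A potential walk of the fourientation `F` from `a` to `b`: each step uses
a direction present in `F` (so each edge is bioriented or oriented
consistently with the walk). -/
def IsPWalk (F : E → Bool × Bool) : V → List (E × Bool) → V → Prop
  | a, [], b => a = b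
  | a, p :: rest, b => G.ftail p = a ∧ present F p ∧ IsPWalk F (G.fhead p) rest b

/-- A potential path: a potential walk visiting pairwise distinct vertices. -/
def IsPPath (F : E → Bool × Bool) (a : V) (w : List (E × Bool)) (b : V) : Prop :=
  G.IsPWalk F a w b ∧ (a :: w.map G.fhead).Nodup

end RefGraph

namespace BKL

open RefGraph

variable {V E : Type}

theorem step_mono (H : RefGraph V E) {S T : Set E} (h : S ⊆ T) {a b : V}
    (hab : H.step S a b) : H.step T a b := by
  obtain ⟨g, hg, ho⟩ := hab; exact ⟨g, h hg, ho⟩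

theorem conn_mono (H : RefGraph V E) {S T : Set E} (h : S ⊆ T) {a b : V}
    (hab : Quot.mk (H.step S) a = Quot.mk (H.step S) b) :
    Quot.mk (H.step T) a = Quot.mk (H.step T) b :=
  congrArg (Quot.lift (Quot.mk (H.step T)) fun _ _ hxy => Quot.sound (step_mono H h hxy)) hab

theorem sep (H : RefGraph V E) {S : Set E} {W : Set V}
    (hW : ∀ g ∈ S, (H.src g ∈ W ↔ H.tgt g ∈ W)) {a b : V}
    (ha : a ∈ W) (hb : b ∉ W) :
    Quot.mk (H.step S) a ≠ Quot.mk (H.step S) b := by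
  intro hab
  have key : ∀ x y, H.step S x y → (x ∈ W) = (y ∈ W) := by
    rintro x y ⟨g, hg, (⟨h1, h2⟩ | ⟨h1, h2⟩)⟩
    · exact propext (h1 ▸ h2 ▸ hW g hg)
    · exact propext (h1 ▸ h2 ▸ (hW g hg).symm)
  have := congrArg (Quot.lift (fun v => v ∈ W) key) hab
  simp only at this
  exact hb (this ▸ ha)

noncomputable instance quotFintype [Fintype V] (H : RefGraph V E) (S : Set E) :
    Fintype (Quot (H.step S)) :=
  Fintype.ofFinite _

end BKL
namespace BKL

variable {V E : Type} [Fintype V]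

/-- The canonical map between component quotients for `S ⊆ T`. -/
noncomputable def cmap (H : RefGraph V E) {S T : Set E} (h : S ⊆ T) :
    Quot (H.step S) → Quot (H.step T) :=
  Quot.lift (Quot.mk (H.step T)) fun _ _ hxy => Quot.sound (step_mono H h hxy)

theorem cmap_surj (H : RefGraph V E) {S T : Set E} (h : S ⊆ T) :
    Function.Surjective (cmap H h) := by
  intro y; induction y using Quot.ind with
  | _ a => exact ⟨Quot.mk _ a, rfl⟩

theorem kappa_le (H : RefGraph V E) {S T : Set E} (h : S ⊆ T) :
    H.kappa T ≤ H.kappa S :=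
  Nat.card_le_card_of_surjective (cmap H h) (cmap_surj H h)

theorem kappa_lt (H : RefGraph V E) {S T : Set E} (hST : S ⊆ T) {a b : V}
    (hT : Quot.mk (H.step T) a = Quot.mk (H.step T) b)
    (hS : Quot.mk (H.step S) a ≠ Quot.mk (H.step S) b) :
    H.kappa T < H.kappa S := by
  have hni : ¬ Function.Injective (cmap H hST) := by
    intro hinj
    exact hS (hinj (show cmap H hST _ = cmap H hST _ from hT))
  have := Fintype.card_lt_of_surjective_not_injective (cmap H hST)
    (cmap_surj H hST) hni
  unfold RefGraph.kappa
  rw [Nat.card_eq_fintype_card, Nat.card_eq_fintype_card]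
  exact this

theorem kappa_eq_of (H : RefGraph V E) {S T : Set E} (hST : S ⊆ T)
    (hconn : ∀ g ∈ T, Quot.mk (H.step S) (H.src g) = Quot.mk (H.step S) (H.tgt g)) :
    H.kappa S = H.kappa T := by
  refine le_antisymm ?_ (kappa_le H hST)
  refine Nat.card_le_card_of_surjective
    (Quot.lift (Quot.mk (H.step S)) ?_) ?_
  · rintro x y ⟨g, hg, (⟨h1, h2⟩ | ⟨h1, h2⟩)⟩
    · exact h1 ▸ h2 ▸ hconn g hg
    · exact h1 ▸ h2 ▸ (hconn g hg).symm
  · intro y; induction y using Quot.ind with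
    | _ a => exact ⟨Quot.mk _ a, rfl⟩

theorem exists_conn_of_lt (H : RefGraph V E) {S T : Set E} (hST : S ⊆ T)
    (h : H.kappa T < H.kappa S) :
    ∃ a b : V, Quot.mk (H.step T) a = Quot.mk (H.step T) b ∧
      Quot.mk (H.step S) a ≠ Quot.mk (H.step S) b := by
  by_contra hcon
  push_neg at hcon
  have key : ∀ x y : V, H.step T x y →
      Quot.mk (H.step S) x = Quot.mk (H.step S) y := by
    intro x y hxy
    exact hcon x y (Quot.sound hxy)
  have : H.kappa S ≤ H.kappa T := by
    refine Nat.card_le_card_of_surjective (Quot.lift (Quot.mk (H.step S)) key) ?_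
    intro y; induction y using Quot.ind with
    | _ a => exact ⟨Quot.mk _ a, rfl⟩
  omega

end BKL
set_option linter.unusedSectionVars false
set_option linter.unusedVariables false
set_option maxHeartbeats 1000000

namespace BKL

variable {V E : Type} [Fintype V] [Fintype E]

/-- Any nonempty disconnecting set contains a cut. -/
theorem exists_cut_subset (H : RefGraph V E) :
    ∀ n (X : Set E), X.ncard ≤ n → X.Nonempty →
      H.kappa Set.univ < H.kappa Xᶜ → ∃ C ⊆ X, H.IsCut C := by
  intro n
  induction n with
  | zero =>
    intro X hn hne _
    obtain ⟨x, hx⟩ := hne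
    have : 0 < X.ncard := (Set.ncard_pos (Set.toFinite X)).mpr ⟨x, hx⟩
    omega
  | succ n ih =>
    intro X hn hne hk
    by_cases hall : ∀ C' : Set E, C' ⊂ X → C'.Nonempty →
        ¬ (H.kappa C'ᶜ > H.kappa Set.univ)
    · exact ⟨X, le_refl _, hne, hk, hall⟩
    · push_neg at hall
      obtain ⟨C', hC'sub, hC'ne, hC'k⟩ := hall
      obtain ⟨C, hCsub, hC⟩ := ih C' (by
        have h1 : C'.ncard < X.ncard := Set.ncard_lt_ncard hC'sub (Set.toFinite X)
        omega) hC'ne hC'k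
      exact ⟨C, hCsub.trans hC'sub.subset, hC⟩

/-- Fundamental-cut construction: if removing `f0` from `D` disconnects the
endpoints of `f0` within `D`, there is a cut meeting `D` exactly in `f0`. -/
theorem exists_cut_inter (H : RefGraph V E) {D : Set E} {f0 : E} (hf0 : f0 ∈ D)
    (hdisc : Quot.mk (H.step (D \ {f0})) (H.src f0) ≠
      Quot.mk (H.step (D \ {f0})) (H.tgt f0)) :
    ∃ Cu : Set E, H.IsCut Cu ∧ Cu ∩ D = {f0} := by
  classical
  set A : Set E := D \ {f0} with hA
  set U : Set V := {v | Quot.mk (H.step A) v = Quot.mk (H.step A) (H.src f0)} with hU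
  have hsrcU : H.src f0 ∈ U := rfl
  have htgtU : H.tgt f0 ∉ U := fun h => hdisc h.symm
  set X : Set E := {g | H.crossing U g} with hX
  -- A-edges do not cross U
  have hAX : ∀ g ∈ A, g ∉ X := by
    intro g hg hgX
    have hconn : Quot.mk (H.step A) (H.src g) = Quot.mk (H.step A) (H.tgt g) :=
      Quot.sound ⟨g, hg, Or.inl ⟨rfl, rfl⟩⟩
    have : H.src g ∈ U ↔ H.tgt g ∈ U := by
      constructor <;> intro h <;> simp only [hU, Set.mem_setOf_eq] at h ⊢
      · exact hconn.symm.trans h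
      · exact hconn.trans h
    have hcr : H.src g ∈ U ↔ H.tgt g ∉ U := hgX
    tauto
  have hAXc : A ⊆ Xᶜ := fun g hg => hAX g hg
  have hf0X : f0 ∈ X := by
    simp only [hX, Set.mem_setOf_eq, RefGraph.crossing]
    tauto
  -- U is closed under Xᶜ-steps (tautologically: non-crossing edges)
  have hUclosed : ∀ g ∈ Xᶜ, (H.src g ∈ U ↔ H.tgt g ∈ U) := by
    intro g hg
    simp only [hX, Set.mem_compl_iff, Set.mem_setOf_eq, RefGraph.crossing] at hg
    tauto
  set T : Set V := {v | Quot.mk (H.step Xᶜ) v = Quot.mk (H.step Xᶜ) (H.tgt f0)} with hT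
  have htgtT : H.tgt f0 ∈ T := rfl
  -- T ∩ U = ∅
  have hTU : ∀ v ∈ T, v ∉ U := by
    intro v hv hvU
    exact sep H hUclosed hvU htgtU (hv : _)
  -- T is closed under Xᶜ-steps
  have hTclosed : ∀ g ∈ Xᶜ, (H.src g ∈ T ↔ H.tgt g ∈ T) := by
    intro g hg
    have hconn : Quot.mk (H.step Xᶜ) (H.src g) = Quot.mk (H.step Xᶜ) (H.tgt g) :=
      Quot.sound ⟨g, hg, Or.inl ⟨rfl, rfl⟩⟩
    simp only [hT, Set.mem_setOf_eq]
    constructor <;> intro h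
    · exact hconn.symm.trans h
    · exact hconn.trans h
  set Cu : Set E := {g ∈ X | (if H.src g ∈ U then H.tgt g else H.src g) ∈ T} with hCu
  have hf0Cu : f0 ∈ Cu := by
    simp only [hCu, Set.mem_setOf_eq, if_pos hsrcU]
    exact ⟨hf0X, htgtT⟩
  have hCuD : Cu ∩ D = {f0} := by
    ext g
    constructor
    · rintro ⟨⟨hgX, _⟩, hgD⟩
      by_contra hne
      exact hAX g ⟨hgD, hne⟩ hgX
    · rintro rfl
      exact ⟨hf0Cu, hf0⟩
  -- T is closed under Cuᶜ-steps
  have hTclosed' : ∀ g ∈ Cuᶜ, (H.src g ∈ T ↔ H.tgt g ∈ T) := by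
    intro g hg
    by_cases hgX : g ∈ X
    · -- crossing edge not in Cu: its outside endpoint is not in T; inside is in U, not in T
      have hgcr : H.src g ∈ U ↔ H.tgt g ∉ U := hgX
      have hout : (if H.src g ∈ U then H.tgt g else H.src g) ∉ T := by
        intro hT'
        exact hg ⟨hgX, hT'⟩
      by_cases hs : H.src g ∈ U
      · rw [if_pos hs] at hout
        constructor
        · intro h; exact absurd hs (hTU _ h)
        · intro h; exact absurd h hout
      · rw [if_neg hs] at hout
        have htg : H.tgt g ∈ U := by tauto
        constructor
        · intro h; exact absurd h hout
        · intro h; exact absurd htg (hTU _ h)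
    · exact hTclosed g hgX
  refine ⟨Cu, ⟨⟨f0, hf0Cu⟩, ?_, ?_⟩, hCuD⟩
  · -- removing Cu separates src f0 from tgt f0
    refine kappa_lt H (Set.subset_univ _)
      (Quot.sound ⟨f0, trivial, Or.inl ⟨rfl, rfl⟩⟩) ?_
    have := sep H hTclosed' htgtT (fun h => hTU _ h hsrcU)
    exact fun h => this h.symm
  · -- minimality
    intro D' hD' hD'ne
    simp only [gt_iff_lt, not_lt]
    have : H.kappa D'ᶜ = H.kappa Set.univ := by
      refine kappa_eq_of H (Set.subset_univ _) ?_
      intro g _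
      by_cases hgD' : g ∈ D'
      · -- g ∈ D' ⊆ Cu; connect endpoints through another Cu edge
        obtain ⟨h, hhCu, hhD'⟩ := Set.exists_of_ssubset hD'
        have hgCu : g ∈ Cu := hD'.subset hgD'
        have hsub1 : A ⊆ D'ᶜ := fun x hx hx' =>
          hAX x hx (hD'.subset hx').1
        have hsub2 : Xᶜ ⊆ D'ᶜ := fun x hx hx' => hx (hD'.subset hx').1
        -- endpoints of a Cu-edge: one in U (conn to src f0 via A), other in T
        -- (conn to tgt f0 via Xᶜ)
        have hstep_h : Quot.mk (H.step D'ᶜ) (H.src h) = Quot.mk (H.step D'ᶜ) (H.tgt h) :=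
          Quot.sound ⟨h, hhD', Or.inl ⟨rfl, rfl⟩⟩
        have endpoints : ∀ k ∈ Cu,
            Quot.mk (H.step D'ᶜ) (H.src k) = Quot.mk (H.step D'ᶜ) (H.tgt k) := by
          intro k hk
          obtain ⟨hkX, hkT⟩ := hk
          -- the U-side endpoint of k is A-connected to src f0;
          -- the T-side endpoint is Xᶜ-connected to tgt f0.
          have hconnU : ∀ k' ∈ Cu, ∀ u, ((H.src k' ∈ U ∧ u = H.src k') ∨
              (H.src k' ∉ U ∧ u = H.tgt k')) →
              Quot.mk (H.step D'ᶜ) u = Quot.mk (H.step D'ᶜ) (H.src f0) := by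
            rintro k' hk' u (⟨hu, rfl⟩ | ⟨hu, rfl⟩)
            · exact conn_mono H hsub1 hu
            · obtain ⟨hk'X, _⟩ := hk'
              have : H.tgt k' ∈ U := by
                have hcr : H.src k' ∈ U ↔ H.tgt k' ∉ U := hk'X
                tauto
              exact conn_mono H hsub1 this
          have hconnT : ∀ k' ∈ Cu, ∀ u, ((H.src k' ∈ U ∧ u = H.tgt k') ∨
              (H.src k' ∉ U ∧ u = H.src k')) →
              Quot.mk (H.step D'ᶜ) u = Quot.mk (H.step D'ᶜ) (H.tgt f0) := by
            rintro k' hk' u (⟨hu, rfl⟩ | ⟨hu, rfl⟩)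
            · obtain ⟨hk'X, hk'T⟩ := hk'
              rw [if_pos hu] at hk'T
              exact conn_mono H hsub2 hk'T
            · obtain ⟨hk'X, hk'T⟩ := hk'
              rw [if_neg hu] at hk'T
              exact conn_mono H hsub2 hk'T
          -- now chain
          by_cases hsk : H.src k ∈ U
          · have e1 := hconnU k ⟨hkX, hkT⟩ (H.src k) (Or.inl ⟨hsk, rfl⟩)
            have e2 := hconnT k ⟨hkX, hkT⟩ (H.tgt k) (Or.inl ⟨hsk, rfl⟩)
            by_cases hsh : H.src h ∈ U
            · have e3 := hconnU h hhCu (H.src h) (Or.inl ⟨hsh, rfl⟩)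
              have e4 := hconnT h hhCu (H.tgt h) (Or.inl ⟨hsh, rfl⟩)
              calc Quot.mk (H.step D'ᶜ) (H.src k) = _ := e1
                _ = Quot.mk (H.step D'ᶜ) (H.src h) := e3.symm
                _ = Quot.mk (H.step D'ᶜ) (H.tgt h) := hstep_h
                _ = Quot.mk (H.step D'ᶜ) (H.tgt f0) := e4
                _ = Quot.mk (H.step D'ᶜ) (H.tgt k) := e2.symm
            · have e3 := hconnU h hhCu (H.tgt h) (Or.inr ⟨hsh, rfl⟩)
              have e4 := hconnT h hhCu (H.src h) (Or.inr ⟨hsh, rfl⟩)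
              calc Quot.mk (H.step D'ᶜ) (H.src k) = _ := e1
                _ = Quot.mk (H.step D'ᶜ) (H.tgt h) := e3.symm
                _ = Quot.mk (H.step D'ᶜ) (H.src h) := hstep_h.symm
                _ = Quot.mk (H.step D'ᶜ) (H.tgt f0) := e4
                _ = Quot.mk (H.step D'ᶜ) (H.tgt k) := e2.symm
          · have e1 := hconnU k ⟨hkX, hkT⟩ (H.tgt k) (Or.inr ⟨hsk, rfl⟩)
            have e2 := hconnT k ⟨hkX, hkT⟩ (H.src k) (Or.inr ⟨hsk, rfl⟩)
            by_cases hsh : H.src h ∈ U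
            · have e3 := hconnU h hhCu (H.src h) (Or.inl ⟨hsh, rfl⟩)
              have e4 := hconnT h hhCu (H.tgt h) (Or.inl ⟨hsh, rfl⟩)
              calc Quot.mk (H.step D'ᶜ) (H.src k) = _ := e2
                _ = Quot.mk (H.step D'ᶜ) (H.tgt h) := e4.symm
                _ = Quot.mk (H.step D'ᶜ) (H.src h) := hstep_h.symm
                _ = Quot.mk (H.step D'ᶜ) (H.src f0) := e3
                _ = Quot.mk (H.step D'ᶜ) (H.tgt k) := e1.symm
            · have e3 := hconnU h hhCu (H.tgt h) (Or.inr ⟨hsh, rfl⟩)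
              have e4 := hconnT h hhCu (H.src h) (Or.inr ⟨hsh, rfl⟩)
              calc Quot.mk (H.step D'ᶜ) (H.src k) = _ := e2
                _ = Quot.mk (H.step D'ᶜ) (H.src h) := e4.symm
                _ = Quot.mk (H.step D'ᶜ) (H.tgt h) := hstep_h
                _ = Quot.mk (H.step D'ᶜ) (H.src f0) := e3
                _ = Quot.mk (H.step D'ᶜ) (H.tgt k) := e1.symm
        exact endpoints g hgCu
      · exact Quot.sound ⟨g, hgD', Or.inl ⟨rfl, rfl⟩⟩
    omega

end BKL
namespace BKL

variable {V E : Type} [Fintype V] [Fintype E]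

/-- Every cut is the set of crossing edges of some vertex set. -/
theorem cut_eq_crossing (H : RefGraph V E) {Cu : Set E} (hCu : H.IsCut Cu) :
    ∃ U : Set V, ∀ g, g ∈ Cu ↔ H.crossing U g := by
  obtain ⟨hne, hk, hmin⟩ := hCu
  obtain ⟨a, b, hTab, hSab⟩ := exists_conn_of_lt H (Set.subset_univ Cuᶜ) hk
  set U : Set V := {v | Quot.mk (H.step Cuᶜ) v = Quot.mk (H.step Cuᶜ) a} with hUdef
  have haU : a ∈ U := rfl
  have hbU : b ∉ U := fun h => hSab ((h : _).symm)
  have hcross_sub : ∀ g, H.crossing U g → g ∈ Cu := by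
    intro g hcr
    by_contra hg
    have hconn : Quot.mk (H.step Cuᶜ) (H.src g) = Quot.mk (H.step Cuᶜ) (H.tgt g) :=
      Quot.sound ⟨g, hg, Or.inl ⟨rfl, rfl⟩⟩
    have hiff : H.src g ∈ U ↔ H.tgt g ∈ U := by
      constructor <;> intro h <;> simp only [hUdef, Set.mem_setOf_eq] at h ⊢
      · exact hconn.symm.trans h
      · exact hconn.trans h
    have : H.src g ∈ U ↔ H.tgt g ∉ U := hcr
    tauto
  set X : Set E := {g | H.crossing U g} with hXdef
  have hXCu : X ⊆ Cu := fun g hg => hcross_sub g hg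
  have hXne : X.Nonempty := by
    by_contra hX
    push_neg at hX
    have hclosed : ∀ g ∈ (Set.univ : Set E), (H.src g ∈ U ↔ H.tgt g ∈ U) := by
      intro g _
      have : g ∉ X := by simp [hX]
      have hncr : ¬ (H.src g ∈ U ↔ H.tgt g ∉ U) := this
      tauto
    exact sep H hclosed haU hbU hTab
  have hXk : H.kappa Set.univ < H.kappa Xᶜ := by
    refine kappa_lt H (Set.subset_univ _) hTab ?_
    refine sep H ?_ haU hbU
    intro g hg
    have hncr : ¬ (H.src g ∈ U ↔ H.tgt g ∉ U) := hg
    tauto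
  have hXeq : X = Cu := by
    by_contra hne'
    exact hmin X (Set.ssubset_iff_subset_ne.mpr ⟨hXCu, hne'⟩) hXne hXk
  exact ⟨U, fun g => by rw [← hXeq]; exact Iff.rfl⟩

/-- Eulerian condition for a directed edge set. -/
def Eul (H : RefGraph V E) (C : Set E) (dir : E → Bool) : Prop :=
  ∀ v : V, {x ∈ C | H.ohead dir x = v}.ncard = {x ∈ C | H.otail dir x = v}.ncard

theorem ncard_filter_eq (C : Set E) (p : E → Prop) :
    {x ∈ C | p x}.ncard = ((Set.toFinite C).toFinset.filter p).card := by
  classical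
  have h : {x ∈ C | p x} = ↑((Set.toFinite C).toFinset.filter p) := by
    ext x
    simp [Set.Finite.mem_toFinset, Set.mem_setOf_eq]
  rw [h, Set.ncard_coe_finset]

/-- An eulerian edge set meets every cut in an even number of edges; in
particular not exactly one. -/
theorem cut_inter_eul (H : RefGraph V E) {C Cu : Set E} {dir : E → Bool}
    (hE : Eul H C dir) (hCu : H.IsCut Cu) : (Cu ∩ C).ncard ≠ 1 := by
  classical
  obtain ⟨U, hU⟩ := cut_eq_crossing H hCu
  set s : Finset E := (Set.toFinite C).toFinset with hsdef
  have hcard : ∀ p : E → Prop, {x ∈ C | p x}.ncard = (s.filter p).card :=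
    fun p => ncard_filter_eq C p
  -- fiberwise counting
  have hsum : ∀ f : E → V,
      (s.filter (fun x => f x ∈ U)).card =
        ∑ v ∈ Finset.univ.filter (· ∈ U), (s.filter (fun x => f x = v)).card := by
    intro f
    rw [Finset.card_eq_sum_card_fiberwise (f := f)
      (t := Finset.univ.filter (· ∈ U)) (by
        intro x hx
        simp only [Finset.mem_coe, Finset.mem_filter] at hx ⊢
        exact ⟨Finset.mem_univ _, hx.2⟩)]
    apply Finset.sum_congr rfl
    intro v hv
    congr 1
    ext x
    simp only [Finset.mem_filter]
    have hvU : v ∈ U := by simpa using hv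
    constructor
    · rintro ⟨⟨h1, _⟩, h2⟩; exact ⟨h1, h2⟩
    · rintro ⟨h1, h2⟩; exact ⟨⟨h1, h2 ▸ hvU⟩, h2⟩
  have hheads : (s.filter (fun x => H.ohead dir x ∈ U)).card =
      (s.filter (fun x => H.otail dir x ∈ U)).card := by
    rw [hsum, hsum]
    apply Finset.sum_congr rfl
    intro v _
    have := hE v
    rw [hcard, hcard] at this
    exact this
  -- split by the other endpoint
  have hsplit : ∀ f g : E → V,
      (s.filter (fun x => f x ∈ U)).card =
        (s.filter (fun x => f x ∈ U ∧ g x ∈ U)).card +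
        (s.filter (fun x => f x ∈ U ∧ g x ∉ U)).card := by
    intro f g
    rw [← Finset.filter_filter, ← Finset.filter_filter]
    exact (Finset.card_filter_add_card_filter_not
      (s := s.filter (fun x => f x ∈ U)) (p := fun x => g x ∈ U)).symm
  have hcomm : (s.filter (fun x => H.ohead dir x ∈ U ∧ H.otail dir x ∈ U)).card =
      (s.filter (fun x => H.otail dir x ∈ U ∧ H.ohead dir x ∈ U)).card := by
    congr 1
    apply Finset.filter_congr
    intro x _
    exact and_comm
  have hbc : (s.filter (fun x => H.ohead dir x ∈ U ∧ H.otail dir x ∉ U)).card =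
      (s.filter (fun x => H.otail dir x ∈ U ∧ H.ohead dir x ∉ U)).card := by
    have h1 := hsplit (H.ohead dir) (H.otail dir)
    have h2 := hsplit (H.otail dir) (H.ohead dir)
    omega
  -- now compute the cut-cycle intersection
  have hinter : Cu ∩ C = {x ∈ C | H.crossing U x} := by
    ext x
    constructor
    · rintro ⟨h1, h2⟩; exact ⟨h2, (hU x).mp h1⟩
    · rintro ⟨h1, h2⟩; exact ⟨(hU x).mpr h2, h1⟩
  have hcross_iff : ∀ x, H.crossing U x ↔
      ((H.ohead dir x ∈ U ∧ H.otail dir x ∉ U) ∨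
       (H.otail dir x ∈ U ∧ H.ohead dir x ∉ U)) := by
    intro x
    have : H.crossing U x ↔ (H.src x ∈ U ↔ H.tgt x ∉ U) := Iff.rfl
    by_cases hdx : dir x <;>
      simp only [RefGraph.ohead, RefGraph.otail, hdx, if_pos, if_neg, ite_true, ite_false] <;>
      rw [this] <;> tauto
  have hfin : (Cu ∩ C).ncard =
      (s.filter (fun x => H.ohead dir x ∈ U ∧ H.otail dir x ∉ U)).card +
      (s.filter (fun x => H.otail dir x ∈ U ∧ H.ohead dir x ∉ U)).card := by
    rw [hinter, hcard]
    have : s.filter (fun x => H.crossing U x) =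
        s.filter (fun x => H.ohead dir x ∈ U ∧ H.otail dir x ∉ U) ∪
        s.filter (fun x => H.otail dir x ∈ U ∧ H.ohead dir x ∉ U) := by
      rw [← Finset.filter_or]
      apply Finset.filter_congr
      intro x _
      exact hcross_iff x
    rw [this]
    refine Finset.card_union_of_disjoint ?_
    rw [Finset.disjoint_left]
    intro x hx hx'
    simp only [Finset.mem_filter] at hx hx'
    tauto
  omega

end BKL
namespace BKL

variable {V E : Type} [Fintype V] [Fintype E]

/-- A directed walk using direction `dir`. -/
def Walk (H : RefGraph V E) (dir : E → Bool) : V → List E → V → Prop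
  | a, [], b => a = b
  | a, g :: l, b => H.otail dir g = a ∧ Walk H dir (H.ohead dir g) l b

theorem walk_append (H : RefGraph V E) (dir : E → Bool) :
    ∀ {p q : List E} {a c : V}, Walk H dir a (p ++ q) c ↔
      ∃ b, Walk H dir a p b ∧ Walk H dir b q c := by
  intro p
  induction p with
  | nil =>
    intro q a c
    constructor
    · intro h; exact ⟨a, rfl, h⟩
    · rintro ⟨b, hb, h⟩; cases hb; exact h
  | cons g r ih =>
    intro q a c
    constructor
    · rintro ⟨h1, h2⟩
      obtain ⟨b, hb1, hb2⟩ := ih.mp h2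
      exact ⟨b, ⟨h1, hb1⟩, hb2⟩
    · rintro ⟨b, ⟨h1, hb1⟩, hb2⟩
      exact ⟨h1, ih.mpr ⟨b, hb1, hb2⟩⟩

theorem walk_multiset (H : RefGraph V E) (dir : E → Bool) :
    ∀ {l : List E} {a b : V}, Walk H dir a l b →
      (↑(l.map (H.otail dir)) : Multiset V) + {b} =
        (↑(l.map (H.ohead dir)) : Multiset V) + {a} := by
  intro l
  induction l with
  | nil =>
    intro a b h
    cases h
    rfl
  | cons g r ih =>
    rintro a b ⟨h1, h2⟩
    have := ih h2
    simp only [List.map_cons]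
    rw [← Multiset.cons_coe, ← Multiset.cons_coe, Multiset.cons_add, Multiset.cons_add,
      this, h1]
    have e : ∀ (x y : V) (X : Multiset V), x ::ₘ (X + {y}) = y ::ₘ (X + {x}) := by
      intro x y X
      rw [add_comm, Multiset.singleton_add, add_comm, Multiset.singleton_add,
        Multiset.cons_swap]
    exact e a (H.ohead dir g) _

theorem ncard_list_filter {α β : Type} [Fintype α] (l : List α) (hl : l.Nodup)
    (f : α → β) (v : β) :
    {x | x ∈ l ∧ f x = v}.ncard = (l.map f).count v := by
  classical
  induction l with
  | nil =>
    have h : {x | x ∈ ([] : List α) ∧ f x = v} = ∅ := by ext x; simp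
    simp [h]
  | cons g r ih =>
    have hgr : g ∉ r := (List.nodup_cons.mp hl).1
    have hr : r.Nodup := (List.nodup_cons.mp hl).2
    by_cases hfg : f g = v
    · have hset : {x | x ∈ g :: r ∧ f x = v} = insert g {x | x ∈ r ∧ f x = v} := by
        ext x
        simp only [List.mem_cons, Set.mem_setOf_eq, Set.mem_insert_iff]
        constructor
        · rintro ⟨(rfl | hx), h2⟩
          · exact Or.inl rfl
          · exact Or.inr ⟨hx, h2⟩
        · rintro (rfl | ⟨h1, h2⟩)
          · exact ⟨Or.inl rfl, hfg⟩
          · exact ⟨Or.inr h1, h2⟩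
      rw [hset, Set.ncard_insert_of_notMem (fun h => hgr h.1) (Set.toFinite _)]
      rw [ih hr]
      simp [List.count_cons, hfg]
    · have hset : {x | x ∈ g :: r ∧ f x = v} = {x | x ∈ r ∧ f x = v} := by
        ext x
        simp only [List.mem_cons, Set.mem_setOf_eq]
        constructor
        · rintro ⟨(rfl | hx), h2⟩
          · exact absurd h2 hfg
          · exact ⟨hx, h2⟩
        · rintro ⟨h1, h2⟩
          exact ⟨Or.inr h1, h2⟩
      rw [hset, ih hr]
      simp [List.count_cons, hfg]

/-- A closed walk with distinct tails is eulerian on its edge set. -/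
theorem walk_eul (H : RefGraph V E) {dir : E → Bool} {a : V} {l : List E}
    (hw : Walk H dir a l a) (hnd : (l.map (H.otail dir)).Nodup) :
    Eul H {x | x ∈ l} dir := by
  have hlnd : l.Nodup := hnd.of_map
  have hms := walk_multiset H dir hw
  have hms' : (↑(l.map (H.otail dir)) : Multiset V) = ↑(l.map (H.ohead dir)) := by
    exact add_right_cancel hms
  intro v
  have h1 := ncard_list_filter l hlnd (H.ohead dir) v
  have h2 := ncard_list_filter l hlnd (H.otail dir) v
  have hcount : (l.map (H.ohead dir)).count v = (l.map (H.otail dir)).count v := by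
    have := congrArg (Multiset.count v) hms'
    simpa using this.symm
  have e1 : {x ∈ {x | x ∈ l} | H.ohead dir x = v} = {x | x ∈ l ∧ H.ohead dir x = v} := rfl
  have e2 : {x ∈ {x | x ∈ l} | H.otail dir x = v} = {x | x ∈ l ∧ H.otail dir x = v} := rfl
  rw [e1, e2, h1, h2, hcount]

end BKL
namespace BKL

variable {V E : Type} [Fintype V] [Fintype E]

theorem walk_tails (H : RefGraph V E) (dir : E → Bool) :
    ∀ {p : List E} {a w : V}, Walk H dir a p w →
      p.map (H.otail dir) = (a :: p.map (H.ohead dir)).dropLast := by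
  intro p
  induction p with
  | nil => intro a w h; simp
  | cons g r ih =>
    rintro a w ⟨h1, h2⟩
    simp only [List.map_cons]
    rw [List.dropLast_cons₂, ← ih h2, h1]

theorem walk_getLast (H : RefGraph V E) (dir : E → Bool) :
    ∀ {p : List E} {a w : V}, Walk H dir a p w →
      (a :: p.map (H.ohead dir)).getLast (List.cons_ne_nil _ _) = w := by
  intro p
  induction p with
  | nil => intro a w h; cases h; simp
  | cons g r ih =>
    rintro a w ⟨h1, h2⟩
    rw [List.map_cons, List.getLast_cons (List.cons_ne_nil _ _)]
    exact ih h2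

theorem getLast_not_mem_dropLast {α : Type} (L : List α) (h : L ≠ [])
    (hnd : L.Nodup) : L.getLast h ∉ L.dropLast := by
  intro hmem
  have hsplit := List.dropLast_append_getLast h
  rw [← hsplit] at hnd
  exact (List.disjoint_of_nodup_append hnd) hmem (by simp)

/-- Extraction of a simple closed directed walk from a minimal eulerian set. -/
theorem extract_cycle (H : RefGraph V E) {C : Set E} {dir : E → Bool}
    (hne : C.Nonempty) (hEul : Eul H C dir)
    (hmin : ∀ D ⊆ C, D.Nonempty → Eul H D dir → D = C) :
    ∃ (a : V) (l : List E), Walk H dir a l a ∧ l ≠ [] ∧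
      (l.map (H.otail dir)).Nodup ∧ {x | x ∈ l} = C := by
  classical
  have hout : ∀ w : V, (∃ x ∈ C, H.ohead dir x = w) → ∃ g ∈ C, H.otail dir g = w := by
    intro w hx
    have h := hEul w
    have h1 : {x ∈ C | H.ohead dir x = w}.Nonempty := by
      obtain ⟨x, hx1, hx2⟩ := hx; exact ⟨x, hx1, hx2⟩
    have h2 : 0 < {x ∈ C | H.ohead dir x = w}.ncard :=
      (Set.ncard_pos (Set.toFinite _)).mpr h1
    rw [h] at h2
    have h3 := (Set.ncard_pos (Set.toFinite _)).mp h2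
    obtain ⟨g, hg1, hg2⟩ := h3
    exact ⟨g, hg1, hg2⟩
  have main : ∀ (n : ℕ) (a : V) (p : List E) (w : V), Walk H dir a p w → p ≠ [] →
      (∀ x ∈ p, x ∈ C) → (a :: p.map (H.ohead dir)).Nodup →
      Fintype.card V ≤ p.length + n →
      ∃ (a' : V) (l : List E), Walk H dir a' l a' ∧ l ≠ [] ∧
        (l.map (H.otail dir)).Nodup ∧ {x | x ∈ l} = C := by
    intro n
    induction n with
    | zero =>
      intro a p w hw hpne hpC hnd hlen
      have : (a :: p.map (H.ohead dir)).length ≤ Fintype.card V :=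
        hnd.length_le_card
      simp at this
      omega
    | succ n ih =>
      intro a p w hw hpne hpC hnd hlen
      have hlast := walk_getLast H dir hw
      have htails := walk_tails H dir hw
      have hwlast : w ∉ p.map (H.otail dir) := by
        rw [htails, ← hlast]
        exact getLast_not_mem_dropLast _ (List.cons_ne_nil _ _) hnd
      have hwheads : ∃ x ∈ C, H.ohead dir x = w := by
        have hmapne : p.map (H.ohead dir) ≠ [] := by
          simp [hpne]
        refine ⟨p.getLast hpne, hpC _ (List.getLast_mem hpne), ?_⟩
        rw [List.getLast_cons hmapne] at hlast
        rw [← hlast]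
        exact (List.getLast_map _).symm
      obtain ⟨g, hgC, hgtail⟩ := hout w hwheads
      have hgp : g ∉ p := by
        intro hgp
        exact hwlast (hgtail ▸ List.mem_map_of_mem (f := H.otail dir) hgp)
      by_cases hfresh : H.ohead dir g ∈ a :: p.map (H.ohead dir)
      · rcases List.mem_cons.mp hfresh with heq | hmem
        · -- closes at the start vertex a
          have hwalk : Walk H dir a (p ++ [g]) a :=
            (walk_append H dir).mpr ⟨w, hw, hgtail, heq⟩
          have htnd : ((p ++ [g]).map (H.otail dir)).Nodup := by
            rw [List.map_append]
            simp only [List.map_cons, List.map_nil, hgtail]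
            have hcombined : p.map (H.otail dir) ++ [w] = a :: p.map (H.ohead dir) := by
              rw [htails, ← hlast]
              exact List.dropLast_append_getLast _
            rw [hcombined]
            exact hnd
          refine ⟨a, p ++ [g], hwalk, by simp, htnd, ?_⟩
          refine hmin _ ?_ ⟨g, by simp⟩ (walk_eul H hwalk htnd)
          intro x hx
          rcases List.mem_append.mp hx with h | h
          · exact hpC x h
          · simp at h; exact h ▸ hgC
        · -- closes at an interior vertex
          obtain ⟨x, hxp, hxhead⟩ := List.mem_map.mp hmem
          obtain ⟨p₁, p₂, rfl⟩ := List.append_of_mem hxp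
          obtain ⟨b₁, hb₁, hxtail, hxwalk⟩ := (walk_append H dir).mp hw
          have hwalk : Walk H dir (H.ohead dir x) (p₂ ++ [g]) (H.ohead dir x) :=
            (walk_append H dir).mpr ⟨w, hxwalk, hgtail, hxhead.symm⟩
          have htnd : ((p₂ ++ [g]).map (H.otail dir)).Nodup := by
            rw [List.map_append]
            simp only [List.map_cons, List.map_nil, hgtail]
            have hp2sub : (p₂.map (H.otail dir)).Sublist ((p₁ ++ x :: p₂).map (H.otail dir)) := by
              exact List.Sublist.map _
                ((List.sublist_cons_self x p₂).trans (List.sublist_append_right _ _))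
            have hptnd : ((p₁ ++ x :: p₂).map (H.otail dir)).Nodup := by
              rw [htails]
              exact (List.dropLast_sublist _).nodup hnd
            refine List.Nodup.append (hp2sub.nodup hptnd) (List.nodup_singleton _) ?_
            intro y hy hy'
            simp at hy'
            subst hy'
            exact hwlast (hp2sub.subset hy)
          refine ⟨H.ohead dir x, p₂ ++ [g], hwalk, by simp, htnd, ?_⟩
          refine hmin _ ?_ ⟨g, by simp⟩ (walk_eul H hwalk htnd)
          intro y hy
          rcases List.mem_append.mp hy with h | h
          · exact hpC y (by simp [h])
          · simp at h; exact h ▸ hgC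
      · -- extend the path
        refine ih a (p ++ [g]) (H.ohead dir g)
          ((walk_append H dir).mpr ⟨w, hw, hgtail, rfl⟩) (by simp) ?_ ?_ ?_
        · intro x hx
          rcases List.mem_append.mp hx with h | h
          · exact hpC x h
          · simp at h; exact h ▸ hgC
        · have : a :: (p ++ [g]).map (H.ohead dir) =
              (a :: p.map (H.ohead dir)) ++ [H.ohead dir g] := by
            simp
          rw [this]
          refine List.Nodup.append hnd (List.nodup_singleton _) ?_
          intro y hy hy'
          simp at hy'
          subst hy'
          exact hfresh hy
        · simp
          omega
  obtain ⟨f0, hf0⟩ := hne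
  by_cases hloop : H.ohead dir f0 = H.otail dir f0
  · have hwalk : Walk H dir (H.otail dir f0) [f0] (H.otail dir f0) := ⟨rfl, hloop⟩
    have htnd : ([f0].map (H.otail dir)).Nodup := by simp
    refine ⟨_, [f0], hwalk, by simp, htnd, ?_⟩
    refine hmin _ ?_ ⟨f0, by simp⟩ (walk_eul H hwalk htnd)
    intro x hx
    simp at hx
    exact hx ▸ hf0
  · refine main (Fintype.card V) (H.otail dir f0) [f0] (H.ohead dir f0)
      ⟨rfl, rfl⟩ (by simp) (by intro x hx; simp at hx; exact hx ▸ hf0) ?_ (by simp)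
    simp
    exact fun h => hloop h.symm

end BKL
namespace BKL

variable {V E : Type} [Fintype V] [Fintype E]

theorem first_mem {α : Type} (S : Set α) :
    ∀ (l : List α), (∃ x ∈ l, x ∈ S) →
      ∃ A f0 B, l = A ++ f0 :: B ∧ f0 ∈ S ∧ ∀ x ∈ A, x ∉ S := by
  intro l
  induction l with
  | nil => rintro ⟨x, hx, _⟩; simp at hx
  | cons y r ih =>
    intro h
    by_cases hy : y ∈ S
    · exact ⟨[], y, r, rfl, hy, by simp⟩
    · obtain ⟨A, f0, B, heq, hf0, hA⟩ := ih (by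
        obtain ⟨x, hx, hxS⟩ := h
        rcases List.mem_cons.mp hx with rfl | hx'
        · exact absurd hxS hy
        · exact ⟨x, hx', hxS⟩)
      refine ⟨y :: A, f0, B, by rw [heq]; rfl, hf0, ?_⟩
      intro x hx
      rcases List.mem_cons.mp hx with rfl | hx'
      · exact hy
      · exact hA x hx'

theorem walk_endpoints_mem (H : RefGraph V E) (dir : E → Bool) :
    ∀ {B : List E} {x b : V}, Walk H dir x B b → ∀ g ∈ B,
      H.otail dir g ∈ {v | v ∈ B.map (H.otail dir)} ∪ {b} ∧
      H.ohead dir g ∈ {v | v ∈ B.map (H.otail dir)} ∪ {b} := by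
  intro B
  induction B with
  | nil => intro x b _ g hg; simp at hg
  | cons y r ih =>
    rintro x b ⟨hty, hwr⟩ g hg
    rcases List.mem_cons.mp hg with rfl | hgr
    · constructor
      · left; simp
      · cases r with
        | nil => right; exact Set.mem_singleton_iff.mpr hwr
        | cons z r' =>
          left
          have : H.otail dir z = H.ohead dir g := hwr.1
          simp only [List.map_cons, Set.mem_setOf_eq, List.mem_cons]
          exact Or.inr (Or.inl this.symm)
    · obtain ⟨h1, h2⟩ := ih hwr g hgr
      constructor
      · rcases h1 with h | h
        · left; simp only [Set.mem_setOf_eq, List.map_cons, List.mem_cons]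
          right; exact h
        · right; exact h
      · rcases h2 with h | h
        · left; simp only [Set.mem_setOf_eq, List.map_cons, List.mem_cons]
          right; exact h
        · right; exact h

theorem walk_start_mem (H : RefGraph V E) (dir : E → Bool) {B : List E} {x b : V}
    (hw : Walk H dir x B b) :
    x ∈ {v | v ∈ B.map (H.otail dir)} ∪ {b} := by
  cases B with
  | nil => right; exact hw
  | cons y r => left; simp only [Set.mem_setOf_eq, List.map_cons, List.mem_cons]
                exact Or.inl hw.1.symm

/-- A minimal eulerian set is a cycle. -/
theorem min_eul_isCycle (H : RefGraph V E) {C : Set E} {dir : E → Bool}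
    (hne : C.Nonempty) (hEul : Eul H C dir)
    (hmin : ∀ D ⊆ C, D.Nonempty → Eul H D dir → D = C) : H.IsCycle C := by
  refine ⟨hne, fun Cu hCu => cut_inter_eul H hEul hCu, ?_⟩
  intro D hD hDne hprop
  obtain ⟨a, l, hwalk, hlne, htnd, hset⟩ := extract_cycle H hne hEul hmin
  obtain ⟨g0, hg0C, hg0D⟩ := Set.exists_of_ssubset hD
  have hg0l : g0 ∈ l := by rw [← hset] at hg0C; exact hg0C
  obtain ⟨p, q, rfl⟩ := List.append_of_mem hg0l
  obtain ⟨b, hbp, hbq⟩ := (walk_append H dir).mp hwalk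
  have hwalk2 : Walk H dir b ((g0 :: q) ++ p) b := (walk_append H dir).mpr ⟨a, hbq, hbp⟩
  have hperm : ((g0 :: q) ++ p).Perm (p ++ g0 :: q) := List.perm_append_comm
  have htnd2 : (((g0 :: q) ++ p).map (H.otail dir)).Nodup :=
    ((hperm.map _).nodup_iff).mpr htnd
  have hset2 : ∀ x, x ∈ C ↔ x ∈ (g0 :: q) ++ p := by
    intro x
    rw [← hset]
    exact ⟨fun h => hperm.mem_iff.mpr h, fun h => hperm.mem_iff.mp h⟩
  have hDqp : ∃ x ∈ q ++ p, x ∈ D := by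
    obtain ⟨f, hf⟩ := hDne
    have hfC : f ∈ (g0 :: q) ++ p := (hset2 f).mp (hD.subset hf)
    have h3 : f = g0 ∨ f ∈ q ∨ f ∈ p := by simpa using hfC
    rcases h3 with rfl | hf'
    · exact absurd hf hg0D
    · exact ⟨f, by simpa using hf', hf⟩
  obtain ⟨A, f0, B, hsplit, hf0D, hA⟩ := first_mem D _ hDqp
  have hlisteq : (g0 :: q) ++ p = g0 :: (A ++ f0 :: B) := by
    simp only [List.cons_append]
    rw [← hsplit]
  rw [hlisteq] at hwalk2 htnd2
  obtain ⟨hg0t, hrest⟩ := hwalk2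
  obtain ⟨c, hcA, hf0t, hBwalk⟩ := (walk_append H dir).mp hrest
  set W : Set V := {v | v ∈ B.map (H.otail dir)} ∪ {b} with hWdef
  have hheadW : H.ohead dir f0 ∈ W := walk_start_mem H dir hBwalk
  have htailW : H.otail dir f0 ∉ W := by
    have hnd := htnd2
    simp only [List.map_cons, List.map_append] at hnd
    rw [List.nodup_cons] at hnd
    obtain ⟨hb1, hnd2⟩ := hnd
    have h1 : H.otail dir f0 ≠ H.otail dir g0 := by
      intro h
      exact hb1 (h ▸ (by simp : H.otail dir f0 ∈
        List.map (H.otail dir) A ++ H.otail dir f0 :: List.map (H.otail dir) B))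
    obtain ⟨_, hnd3, _⟩ := List.nodup_append.mp hnd2
    rw [List.nodup_cons] at hnd3
    rintro (h | h)
    · exact hnd3.1 h
    · exact h1 (by rw [h, hg0t])
  have hDsub : D \ {f0} ⊆ {x | x ∈ B} := by
    rintro k ⟨hkD, hkne⟩
    have hkC : k ∈ g0 :: (A ++ f0 :: B) := by
      rw [← hlisteq]
      exact (hset2 k).mp (hD.subset hkD)
    rcases List.mem_cons.mp hkC with rfl | hk'
    · exact absurd hkD hg0D
    rcases List.mem_append.mp hk' with hk'' | hk''
    · exact absurd hkD (hA k hk'')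
    rcases List.mem_cons.mp hk'' with rfl | hk'''
    · exact absurd rfl hkne
    · exact hk'''
  have hWclosed : ∀ g ∈ D \ {f0}, (H.src g ∈ W ↔ H.tgt g ∈ W) := by
    intro g hg
    obtain ⟨ht, hh⟩ := walk_endpoints_mem H dir hBwalk g (hDsub hg)
    have hconv : ∀ u : V, (u = b ∨ ∃ a' ∈ B, H.otail dir a' = u) → u ∈ W := by
      rintro u (rfl | ⟨a', ha', ha''⟩)
      · right; rfl
      · left; exact List.mem_map.mpr ⟨a', ha', ha''⟩
    have hst : H.src g ∈ W ∧ H.tgt g ∈ W := by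
      by_cases hdg : dir g
      · have ht' : H.src g = b ∨ ∃ a' ∈ B, H.otail dir a' = H.src g := by
          simpa [RefGraph.otail, RefGraph.ohead, hdg] using ht
        have hh' : H.tgt g = b ∨ ∃ a' ∈ B, H.otail dir a' = H.tgt g := by
          simpa [RefGraph.otail, RefGraph.ohead, hdg] using hh
        exact ⟨hconv _ ht', hconv _ hh'⟩
      · have ht' : H.tgt g = b ∨ ∃ a' ∈ B, H.otail dir a' = H.tgt g := by
          simpa [RefGraph.otail, RefGraph.ohead, hdg] using ht
        have hh' : H.src g = b ∨ ∃ a' ∈ B, H.otail dir a' = H.src g := by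
          simpa [RefGraph.otail, RefGraph.ohead, hdg] using hh
        exact ⟨hconv _ hh', hconv _ ht'⟩
    exact ⟨fun _ => hst.2, fun _ => hst.1⟩
  have hsep : Quot.mk (H.step (D \ {f0})) (H.ohead dir f0) ≠
      Quot.mk (H.step (D \ {f0})) (H.otail dir f0) :=
    sep H hWclosed hheadW htailW
  have hdisc : Quot.mk (H.step (D \ {f0})) (H.src f0) ≠
      Quot.mk (H.step (D \ {f0})) (H.tgt f0) := by
    by_cases hdf : dir f0
    · have e1 : H.ohead dir f0 = H.tgt f0 := by simp [RefGraph.ohead, hdf]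
      have e2 : H.otail dir f0 = H.src f0 := by simp [RefGraph.otail, hdf]
      rw [e1, e2] at hsep
      exact fun h => hsep h.symm
    · have e1 : H.ohead dir f0 = H.src f0 := by simp [RefGraph.ohead, hdf]
      have e2 : H.otail dir f0 = H.tgt f0 := by simp [RefGraph.otail, hdf]
      rw [e1, e2] at hsep
      exact hsep
  obtain ⟨Cu, hCu, hCuD⟩ := exists_cut_inter H hf0D hdisc
  have := hprop Cu hCu
  rw [hCuD] at this
  simp at this

end BKL
namespace BKL

variable {V E : Type} [Fintype V] [Fintype E]

theorem eul_diff (H : RefGraph V E) {S D : Set E} {dir : E → Bool} (hDS : D ⊆ S)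
    (hS : Eul H S dir) (hD : Eul H D dir) : Eul H (S \ D) dir := by
  intro v
  have key : ∀ f : E → V,
      {x ∈ S \ D | f x = v} = {x ∈ S | f x = v} \ {x ∈ D | f x = v} := by
    intro f
    ext x
    constructor
    · rintro ⟨⟨h1, h2⟩, h3⟩
      exact ⟨⟨h1, h3⟩, fun h => h2 h.1⟩
    · rintro ⟨⟨h1, h3⟩, h2⟩
      exact ⟨⟨h1, fun hD' => h2 ⟨hD', h3⟩⟩, h3⟩
  have sub : ∀ f : E → V, {x ∈ D | f x = v} ⊆ {x ∈ S | f x = v} := by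
    rintro f x ⟨h1, h2⟩
    exact ⟨hDS h1, h2⟩
  rw [key, key, Set.ncard_diff (sub _) (Set.toFinite _),
    Set.ncard_diff (sub _) (Set.toFinite _), hS v, hD v]

/-- From an eulerian set through `f`, extract a cycle through `f`. -/
theorem eul_to_cycle (H : RefGraph V E) {S : Set E} {dir : E → Bool} {f : E}
    (hf : f ∈ S) (hEul : Eul H S dir) :
    ∃ C ⊆ S, f ∈ C ∧ H.IsCycle C ∧ Eul H C dir := by
  classical
  suffices h : ∀ (n : ℕ) (S : Set E), S.ncard ≤ n → f ∈ S → Eul H S dir →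
      ∃ C ⊆ S, f ∈ C ∧ H.IsCycle C ∧ Eul H C dir by
    exact h S.ncard S le_rfl hf hEul
  intro n
  induction n with
  | zero =>
    intro S hn hf _
    have : 0 < S.ncard := (Set.ncard_pos (Set.toFinite S)).mpr ⟨f, hf⟩
    omega
  | succ n ih =>
    intro S hn hf hEul
    by_cases hex : ∃ D ⊂ S, D.Nonempty ∧ Eul H D dir
    · obtain ⟨D, hDsub, hDne, hDEul⟩ := hex
      have hlt : D.ncard < S.ncard := Set.ncard_lt_ncard hDsub (Set.toFinite S)
      by_cases hfD : f ∈ D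
      · obtain ⟨C, h1, h2, h3, h4⟩ := ih D (by omega) hfD hDEul
        exact ⟨C, h1.trans hDsub.subset, h2, h3, h4⟩
      · have hfSD : f ∈ S \ D := ⟨hf, hfD⟩
        have hSD : Eul H (S \ D) dir := eul_diff H hDsub.subset hEul hDEul
        have hlt2 : (S \ D).ncard < S.ncard := by
          have h1 : (S \ D).ncard = S.ncard - D.ncard :=
            Set.ncard_diff hDsub.subset (Set.toFinite _)
          have h2 : 0 < D.ncard := (Set.ncard_pos (Set.toFinite D)).mpr hDne
          have h3 : D.ncard ≤ S.ncard := Set.ncard_le_ncard hDsub.subset (Set.toFinite S)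
          omega
        obtain ⟨C, h1, h2, h3, h4⟩ := ih (S \ D) (by omega) hfSD hSD
        exact ⟨C, h1.trans Set.diff_subset, h2, h3, h4⟩
    · push_neg at hex
      have hmin : ∀ D ⊆ S, D.Nonempty → Eul H D dir → D = S := by
        intro D hD hDne hDEul
        by_contra hne'
        exact (hex D (Set.ssubset_iff_subset_ne.mpr ⟨hD, hne'⟩) hDne) hDEul
      exact ⟨S, le_refl _, hf,
        min_eul_isCycle H ⟨f, hf⟩ hEul hmin, hEul⟩

end BKL
namespace BKL

variable {V E : Type} [Fintype V] [Fintype E]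

theorem kappa_contr (G : RefGraph V E) (e : E) (S : Set {f : E // f ≠ e}) :
    (G.contr e).kappa S = G.kappa (Subtype.val '' S ∪ {e}) := by
  unfold RefGraph.kappa
  apply Nat.card_congr
  have h1 : ∀ a b : V, (a = G.src e ∧ b = G.tgt e) →
      Quot.mk (G.step (Subtype.val '' S ∪ {e})) a =
      Quot.mk (G.step (Subtype.val '' S ∪ {e})) b := by
    rintro a b ⟨rfl, rfl⟩
    exact Quot.sound ⟨e, Or.inr rfl, Or.inl ⟨rfl, rfl⟩⟩
  have h2 : ∀ x y, (G.contr e).step S x y →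
      Quot.lift (Quot.mk (G.step (Subtype.val '' S ∪ {e}))) h1 x =
      Quot.lift (Quot.mk (G.step (Subtype.val '' S ∪ {e}))) h1 y := by
    rintro x y ⟨f, hf, (⟨hx, hy⟩ | ⟨hx, hy⟩)⟩ <;> subst hx <;> subst hy
    · exact Quot.sound ⟨f.1, Or.inl ⟨f, hf, rfl⟩, Or.inl ⟨rfl, rfl⟩⟩
    · exact Quot.sound ⟨f.1, Or.inl ⟨f, hf, rfl⟩, Or.inr ⟨rfl, rfl⟩⟩
  have h3 : ∀ a b : V, G.step (Subtype.val '' S ∪ {e}) a b →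
      Quot.mk ((G.contr e).step S) (Quot.mk _ a) =
      Quot.mk ((G.contr e).step S) (Quot.mk _ b) := by
    rintro a b ⟨g, hg, hor⟩
    rcases hg with ⟨f, hfS, rfl⟩ | hge
    · rcases hor with ⟨h1', h2'⟩ | ⟨h1', h2'⟩ <;> subst h1' <;> subst h2'
      · exact Quot.sound ⟨f, hfS, Or.inl ⟨rfl, rfl⟩⟩
      · exact Quot.sound ⟨f, hfS, Or.inr ⟨rfl, rfl⟩⟩
    · have hge' : g = e := hge
      subst hge'
      rcases hor with ⟨h1', h2'⟩ | ⟨h1', h2'⟩ <;> subst h1' <;> subst h2'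
      · exact congrArg _ (Quot.sound ⟨rfl, rfl⟩)
      · exact (congrArg _ (Quot.sound ⟨rfl, rfl⟩)).symm
  refine ⟨Quot.lift (Quot.lift (Quot.mk _) h1) h2,
         Quot.lift (fun v => Quot.mk _ (Quot.mk _ v)) h3, ?_, ?_⟩
  · intro z
    induction z using Quot.ind with
    | _ x =>
      induction x using Quot.ind with
      | _ a => rfl
  · intro z
    induction z using Quot.ind with
    | _ a => rfl

theorem compl_val {e : E} (S : Set {f : E // f ≠ e}) :
    Subtype.val '' Sᶜ ∪ {e} = (Subtype.val '' S)ᶜ := by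
  ext g
  constructor
  · rintro (⟨f, hf, rfl⟩ | hg)
    · rintro ⟨f', hf', hff'⟩
      have : f' = f := Subtype.val_injective hff'
      exact hf (this ▸ hf')
    · have hg' : g = e := hg
      rintro ⟨f', _, hff'⟩
      exact f'.2 (hff' ▸ hg')
  · intro hg
    by_cases hge : g = e
    · exact Or.inr hge
    · refine Or.inl ⟨⟨g, hge⟩, ?_, rfl⟩
      intro hmem
      exact hg ⟨⟨g, hge⟩, hmem, rfl⟩

theorem univ_val {e : E} :
    Subtype.val '' (Set.univ : Set {f : E // f ≠ e}) ∪ {e} = Set.univ := by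
  ext g
  simp only [Set.mem_union, Set.mem_univ, iff_true]
  by_cases hge : g = e
  · exact Or.inr hge
  · exact Or.inl ⟨⟨g, hge⟩, trivial, rfl⟩

theorem kappa_contr_compl (G : RefGraph V E) (e : E) (C : Set {f : E // f ≠ e}) :
    (G.contr e).kappa Cᶜ = G.kappa (Subtype.val '' C)ᶜ := by
  rw [kappa_contr, compl_val]

theorem kappa_contr_univ (G : RefGraph V E) (e : E) :
    (G.contr e).kappa Set.univ = G.kappa Set.univ := by
  rw [kappa_contr, univ_val]

theorem isCut_contr (G : RefGraph V E) (e : E) (C : Set {f : E // f ≠ e}) :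
    (G.contr e).IsCut C ↔ G.IsCut (Subtype.val '' C) := by
  have hval : ∀ D : Set E, D ⊆ Subtype.val '' C →
      Subtype.val '' {f : {f : E // f ≠ e} | f.1 ∈ D} = D := by
    intro D hD
    ext g
    constructor
    · rintro ⟨f, hf, rfl⟩; exact hf
    · intro hg
      have hge : g ≠ e := by
        obtain ⟨f, _, rfl⟩ := hD hg
        exact f.2
      exact ⟨⟨g, hge⟩, hg, rfl⟩
  constructor
  · rintro ⟨hne, hk, hmin⟩
    refine ⟨hne.image _, ?_, ?_⟩
    · rw [← kappa_contr_compl, ← kappa_contr_univ (e := e)]; exact hk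
    · intro D hD hDne
      set D' : Set {f : E // f ≠ e} := {f | f.1 ∈ D} with hD'def
      have hDval : Subtype.val '' D' = D := hval D hD.subset
      have hD'sub : D' ⊂ C := by
        constructor
        · intro f hf
          obtain ⟨f', hf', hff'⟩ := hD.subset hf
          exact (Subtype.val_injective hff' : f' = f) ▸ hf'
        · intro hCD
          obtain ⟨g, hgC, hgD⟩ := Set.exists_of_ssubset hD
          obtain ⟨f, hf, rfl⟩ := hgC
          exact hgD ((hDval ▸ Set.mem_image_of_mem _ (hCD hf)))
      have hD'ne : D'.Nonempty := by
        obtain ⟨g, hg⟩ := hDne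
        obtain ⟨f, _, rfl⟩ := hD.subset hg
        exact ⟨f, hg⟩
      have := hmin D' hD'sub hD'ne
      rw [kappa_contr_compl, hDval, kappa_contr_univ] at this
      exact this
  · rintro ⟨hne, hk, hmin⟩
    refine ⟨?_, ?_, ?_⟩
    · obtain ⟨g, hg⟩ := hne
      obtain ⟨f, hf, _⟩ := hg
      exact ⟨f, hf⟩
    · rw [kappa_contr_compl, kappa_contr_univ]; exact hk
    · intro D' hD' hD'ne
      have hsub : Subtype.val '' D' ⊂ Subtype.val '' C := by
        constructor
        · exact Set.image_mono hD'.subset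
        · intro h
          obtain ⟨f, hfC, hfD⟩ := Set.exists_of_ssubset hD'
          obtain ⟨f', hf', hff'⟩ := h (Set.mem_image_of_mem _ hfC)
          exact hfD ((Subtype.val_injective hff' : f' = f) ▸ hf')
      have := hmin _ hsub (hD'ne.image _)
      rw [← kappa_contr_compl, ← kappa_contr_univ (e := e)] at this
      exact this

end BKL
namespace BKL

variable {V E : Type} [Fintype V] [Fintype E]

theorem update_restrict [DecidableEq E] {e : E} (F : E → Bool × Bool) (f : E) (hfe : f ≠ e)
    (X : Bool × Bool) :
    (fun g : {x : E // x ≠ e} => Function.update F f X g.1) =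
      Function.update (fun g : {x : E // x ≠ e} => F g.1) ⟨f, hfe⟩ X := by
  funext g
  by_cases h : g = (⟨f, hfe⟩ : {x : E // x ≠ e})
  · subst h; simp
  · have h1 : g.1 ≠ f := fun hh => h (Subtype.ext hh)
    rw [Function.update_of_ne h1, Function.update_of_ne h]

theorem addDir_restrict [DecidableEq E] {e : E} (F : E → Bool × Bool) (f : E) (hfe : f ≠ e)
    (d : Bool) :
    (fun g : {x : E // x ≠ e} => (RefGraph.addDir F f d) g.1) =
      RefGraph.addDir (fun g : {x : E // x ≠ e} => F g.1) ⟨f, hfe⟩ d :=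
  update_restrict F f hfe _

theorem remDir_restrict [DecidableEq E] {e : E} (F : E → Bool × Bool) (f : E) (hfe : f ≠ e)
    (d : Bool) :
    (fun g : {x : E // x ≠ e} => (RefGraph.remDir F f d) g.1) =
      RefGraph.remDir (fun g : {x : E // x ≠ e} => F g.1) ⟨f, hfe⟩ d :=
  update_restrict F f hfe _

/-- Transfer of potential cuts between `G` and `G/e` when `e` is bioriented. -/
theorem potcut_exists_contr [LinearOrder E] (G : RefGraph V E) (e : E)
    (F₀ : E → Bool × Bool) (hbi : F₀ e = (true, true)) (f : E) (hfe : f ≠ e) :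
    (∃ C, G.PotCut F₀ C ∧ f ∈ C ∧ ∀ g ∈ C, f ≤ g) ↔
    (∃ C', (G.contr e).PotCut (fun g => F₀ g.1) C' ∧ (⟨f, hfe⟩ : {x : E // x ≠ e}) ∈ C' ∧
      ∀ g ∈ C', (⟨f, hfe⟩ : {x : E // x ≠ e}) ≤ g) := by
  constructor
  · rintro ⟨C, ⟨hcut, U, hUC, hUor⟩, hfC, hmin⟩
    have heC : e ∉ C := by
      intro heC
      obtain ⟨h1, h2⟩ := hUor e heC
      by_cases hs : G.src e ∈ U
      · have := h1 hs; rw [hbi] at this; exact absurd this (by simp)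
      · have := h2 hs; rw [hbi] at this; exact absurd this (by simp)
    have hUe : (G.src e ∈ U) = (G.tgt e ∈ U) := by
      have : ¬ G.crossing U e := fun h => heC ((hUC e).mpr h)
      have h' : ¬ (G.src e ∈ U ↔ G.tgt e ∉ U) := this
      by_cases hs : G.src e ∈ U <;> by_cases ht : G.tgt e ∈ U <;>
        simp [hs, ht] at h' ⊢ <;> tauto
    set U' : Set (Quot (fun a b : V => a = G.src e ∧ b = G.tgt e)) :=
      {x | Quot.lift (fun v => v ∈ U) (by rintro a b ⟨rfl, rfl⟩; exact hUe) x} with hU'def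
    have hqmem : ∀ v : V, (Quot.mk _ v ∈ U') ↔ v ∈ U := fun v => Iff.rfl
    set C'' : Set {x : E // x ≠ e} := {g | g.1 ∈ C} with hC''def
    have hval : Subtype.val '' C'' = C := by
      ext g
      constructor
      · rintro ⟨x, hx, rfl⟩; exact hx
      · intro hg
        have hge : g ≠ e := fun h => heC (h ▸ hg)
        exact ⟨⟨g, hge⟩, hg, rfl⟩
    refine ⟨C'', ⟨?_, U', ?_, ?_⟩, hfC, ?_⟩
    · rw [isCut_contr, hval]; exact hcut
    · intro g
      exact (hUC g.1).trans Iff.rfl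
    · intro g hg
      exact hUor g.1 hg
    · intro g hg
      exact Subtype.mk_le_mk.mpr (hmin g.1 hg)
  · rintro ⟨C', ⟨hcut', U', hU'C, hU'or⟩, hfC', hmin'⟩
    set U : Set V := {v | Quot.mk (fun a b : V => a = G.src e ∧ b = G.tgt e) v ∈ U'}
      with hUdef
    have hqeq : Quot.mk (fun a b : V => a = G.src e ∧ b = G.tgt e) (G.src e) =
        Quot.mk _ (G.tgt e) := Quot.sound ⟨rfl, rfl⟩
    refine ⟨Subtype.val '' C', ⟨(isCut_contr G e C').mp hcut', U, ?_, ?_⟩,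
      Set.mem_image_of_mem _ hfC', ?_⟩
    · intro g
      by_cases hge : g = e
      · subst hge
        constructor
        · rintro ⟨x, _, hx⟩; exact absurd hx x.2
        · intro hcr
          have h' : G.src g ∈ U ↔ G.tgt g ∉ U := hcr
          have : (G.src g ∈ U) = (G.tgt g ∈ U) := by
            simp only [hUdef, Set.mem_setOf_eq, hqeq]
          rw [this] at h'
          tauto
      · constructor
        · rintro ⟨x, hx, rfl⟩
          exact (hU'C x).mp hx
        · intro hcr
          exact ⟨⟨g, hge⟩, (hU'C ⟨g, hge⟩).mpr hcr, rfl⟩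
    · rintro g ⟨x, hx, rfl⟩
      exact hU'or x hx
    · rintro g ⟨x, hx, rfl⟩
      exact Subtype.mk_le_mk.mp (hmin' x hx)

end BKL
namespace BKL

variable {V E : Type} [Fintype V] [Fintype E]

theorem quot_mk_eq_iff (G : RefGraph V E) (e : E) (x y : V) :
    Quot.mk (fun a b : V => a = G.src e ∧ b = G.tgt e) x = Quot.mk _ y ↔
    (x = y ∨ ((x = G.src e ∨ x = G.tgt e) ∧ (y = G.src e ∨ y = G.tgt e))) := by
  constructor
  · intro h
    have key : ∀ a b : V, (a = G.src e ∧ b = G.tgt e) →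
        (if a = G.tgt e then G.src e else a) = (if b = G.tgt e then G.src e else b) := by
      rintro a b ⟨rfl, rfl⟩
      simp
    have := congrArg (Quot.lift (fun v => if v = G.tgt e then G.src e else v) key) h
    simp only at this
    by_cases hx : x = G.tgt e <;> by_cases hy : y = G.tgt e
    · exact Or.inl (hx.trans hy.symm)
    · rw [if_pos hx, if_neg hy] at this
      exact Or.inr ⟨Or.inr hx, Or.inl this.symm⟩
    · rw [if_neg hx, if_pos hy] at this
      exact Or.inr ⟨Or.inl this, Or.inr hy⟩
    · rw [if_neg hx, if_neg hy] at this
      exact Or.inl this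
  · rintro (rfl | ⟨hx, hy⟩)
    · rfl
    · have hst : Quot.mk (fun a b : V => a = G.src e ∧ b = G.tgt e) (G.src e) =
          Quot.mk _ (G.tgt e) := Quot.sound ⟨rfl, rfl⟩
      have hx' : Quot.mk (fun a b : V => a = G.src e ∧ b = G.tgt e) x =
          Quot.mk _ (G.src e) := by
        rcases hx with rfl | rfl
        · rfl
        · exact hst.symm
      have hy' : Quot.mk (fun a b : V => a = G.src e ∧ b = G.tgt e) y =
          Quot.mk _ (G.src e) := by
        rcases hy with rfl | rfl
        · rfl
        · exact hst.symm
      exact hx'.trans hy'.symm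

theorem cnt_contr_other (G : RefGraph V E) (e : E) (C' : Set {x : E // x ≠ e})
    (φ : E → V) (φ' : {x : E // x ≠ e} → Quot (fun a b : V => a = G.src e ∧ b = G.tgt e))
    (hφ : ∀ x, φ' x = Quot.mk _ (φ x.1)) (v : V)
    (hv1 : v ≠ G.src e) (hv2 : v ≠ G.tgt e) :
    {x ∈ C' | φ' x = Quot.mk _ v}.ncard = {y ∈ Subtype.val '' C' | φ y = v}.ncard := by
  have himg : Subtype.val '' {x ∈ C' | φ' x = Quot.mk _ v} =
      {y ∈ Subtype.val '' C' | φ y = v} := by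
    ext y
    constructor
    · rintro ⟨x, ⟨hxC, hx⟩, rfl⟩
      rw [hφ] at hx
      rcases (quot_mk_eq_iff G e _ _).mp hx with h | ⟨_, hv⟩
      · exact ⟨Set.mem_image_of_mem _ hxC, h⟩
      · rcases hv with h | h
        · exact absurd h hv1
        · exact absurd h hv2
    · rintro ⟨⟨x, hxC, rfl⟩, hy⟩
      exact ⟨x, ⟨hxC, by rw [hφ, hy]⟩, rfl⟩
  rw [← himg, Set.ncard_image_of_injective _ Subtype.val_injective]

theorem cnt_contr_m (G : RefGraph V E) (e : E) (hnl : G.src e ≠ G.tgt e)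
    (C' : Set {x : E // x ≠ e})
    (φ : E → V) (φ' : {x : E // x ≠ e} → Quot (fun a b : V => a = G.src e ∧ b = G.tgt e))
    (hφ : ∀ x, φ' x = Quot.mk _ (φ x.1)) :
    {x ∈ C' | φ' x = Quot.mk _ (G.src e)}.ncard =
      {y ∈ Subtype.val '' C' | φ y = G.src e}.ncard +
      {y ∈ Subtype.val '' C' | φ y = G.tgt e}.ncard := by
  have himg : Subtype.val '' {x ∈ C' | φ' x = Quot.mk _ (G.src e)} =
      {y ∈ Subtype.val '' C' | φ y = G.src e} ∪
      {y ∈ Subtype.val '' C' | φ y = G.tgt e} := by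
    ext y
    constructor
    · rintro ⟨x, ⟨hxC, hx⟩, rfl⟩
      rw [hφ] at hx
      rcases (quot_mk_eq_iff G e _ _).mp hx with h | ⟨hv, _⟩
      · exact Or.inl ⟨Set.mem_image_of_mem _ hxC, h⟩
      · rcases hv with h | h
        · exact Or.inl ⟨Set.mem_image_of_mem _ hxC, h⟩
        · exact Or.inr ⟨Set.mem_image_of_mem _ hxC, h⟩
    · rintro (⟨⟨x, hxC, rfl⟩, hy⟩ | ⟨⟨x, hxC, rfl⟩, hy⟩)
      · exact ⟨x, ⟨hxC, by
          rw [hφ, hy]⟩, rfl⟩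
      · exact ⟨x, ⟨hxC, by
          rw [hφ, hy]
          exact ((quot_mk_eq_iff G e _ _).mpr (Or.inr ⟨Or.inr rfl, Or.inl rfl⟩))⟩, rfl⟩
  have hdisj : Disjoint {y ∈ Subtype.val '' C' | φ y = G.src e}
      {y ∈ Subtype.val '' C' | φ y = G.tgt e} := by
    rw [Set.disjoint_left]
    rintro y ⟨_, h1⟩ ⟨_, h2⟩
    exact hnl (h1 ▸ h2 ▸ rfl)
  calc {x ∈ C' | φ' x = Quot.mk _ (G.src e)}.ncard
      = (Subtype.val '' {x ∈ C' | φ' x = Quot.mk _ (G.src e)}).ncard :=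
        (Set.ncard_image_of_injective _ Subtype.val_injective).symm
    _ = _ := by rw [himg, Set.ncard_union_eq hdisj (Set.toFinite _) (Set.toFinite _)]

/-- removing an element from a filtered count -/
theorem cnt_remove (C : Set E) (e : E) (φ : E → V) (v : V) :
    {y ∈ C \ {e} | φ y = v}.ncard =
      {y ∈ C | φ y = v}.ncard - (if e ∈ C ∧ φ e = v then 1 else 0) := by
  have heq : {y ∈ C \ {e} | φ y = v} = {y ∈ C | φ y = v} \ {e} := by
    ext y
    constructor
    · rintro ⟨⟨h1, h2⟩, h3⟩; exact ⟨⟨h1, h3⟩, h2⟩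
    · rintro ⟨⟨h1, h3⟩, h2⟩; exact ⟨⟨h1, h2⟩, h3⟩
  rw [heq]
  by_cases hmem : e ∈ C ∧ φ e = v
  · rw [if_pos hmem]
    exact Set.ncard_diff_singleton_of_mem ⟨hmem.1, hmem.2⟩
  · rw [if_neg hmem]
    have : e ∉ {y ∈ C | φ y = v} := fun h => hmem ⟨h.1, h.2⟩
    rw [Set.diff_singleton_eq_self this]
    omega

theorem cnt_mem_pos {C : Set E} {e : E} (φ : E → V) {v : V} (he : e ∈ C)
    (hφ : φ e = v) : 1 ≤ {y ∈ C | φ y = v}.ncard := by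
  have : ({e} : Set E) ⊆ {y ∈ C | φ y = v} := by
    rintro x rfl
    exact ⟨he, hφ⟩
  calc 1 = ({e} : Set E).ncard := by simp
    _ ≤ _ := Set.ncard_le_ncard this (Set.toFinite _)

end BKL
namespace BKL

variable {V E : Type} [Fintype V] [Fintype E]

theorem cnt_insert (T : Set E) (e : E) (he : e ∉ T) (φ : E → V) (v : V) :
    {y ∈ insert e T | φ y = v}.ncard =
      {y ∈ T | φ y = v}.ncard + (if φ e = v then 1 else 0) := by
  by_cases hv : φ e = v
  · rw [if_pos hv]
    have heq : {y ∈ insert e T | φ y = v} = insert e {y ∈ T | φ y = v} := by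
      ext y
      constructor
      · rintro ⟨(rfl | h1), h2⟩
        · exact Or.inl rfl
        · exact Or.inr ⟨h1, h2⟩
      · rintro (rfl | ⟨h1, h2⟩)
        · exact ⟨Or.inl rfl, hv⟩
        · exact ⟨Or.inr h1, h2⟩
    rw [heq, Set.ncard_insert_of_notMem (fun h => he h.1) (Set.toFinite _)]
  · rw [if_neg hv]
    have heq : {y ∈ insert e T | φ y = v} = {y ∈ T | φ y = v} := by
      ext y
      constructor
      · rintro ⟨(rfl | h1), h2⟩
        · exact absurd h2 hv
        · exact ⟨h1, h2⟩
      · rintro ⟨h1, h2⟩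
        exact ⟨Or.inr h1, h2⟩
    rw [heq]
    omega

theorem eul_contr_down (G : RefGraph V E) (e : E) (hnl : G.src e ≠ G.tgt e)
    {C : Set E} {dir : E → Bool} (hEul : Eul G C dir) :
    Eul (G.contr e) {x : {x : E // x ≠ e} | x.1 ∈ C} (fun g => dir g.1) := by
  set C' : Set {x : E // x ≠ e} := {x | x.1 ∈ C} with hC'def
  have hval : Subtype.val '' C' = C \ {e} := by
    ext g
    constructor
    · rintro ⟨x, hx, rfl⟩; exact ⟨hx, x.2⟩
    · rintro ⟨hg, hge⟩; exact ⟨⟨g, hge⟩, hg, rfl⟩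
  have hφh : ∀ x : {x : E // x ≠ e}, (G.contr e).ohead (fun g => dir g.1) x =
      Quot.mk _ (G.ohead dir x.1) := by
    intro x
    unfold RefGraph.ohead
    by_cases h : dir x.1 <;> simp [h, RefGraph.contr]
  have hφt : ∀ x : {x : E // x ≠ e}, (G.contr e).otail (fun g => dir g.1) x =
      Quot.mk _ (G.otail dir x.1) := by
    intro x
    unfold RefGraph.otail
    by_cases h : dir x.1 <;> simp [h, RefGraph.contr]
  intro v'
  induction v' using Quot.ind with
  | _ v =>
  by_cases hv : v = G.src e ∨ v = G.tgt e
  · have hqv : Quot.mk (fun a b : V => a = G.src e ∧ b = G.tgt e) v =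
        Quot.mk _ (G.src e) := by
      rcases hv with rfl | rfl
      · rfl
      · exact (Quot.sound ⟨rfl, rfl⟩).symm
    have hseth : {x ∈ C' | (G.contr e).ohead (fun g => dir g.1) x = Quot.mk _ v} =
        {x ∈ C' | (G.contr e).ohead (fun g => dir g.1) x = Quot.mk _ (G.src e)} := by
      ext x; rw [hqv]
    have hsett : {x ∈ C' | (G.contr e).otail (fun g => dir g.1) x = Quot.mk _ v} =
        {x ∈ C' | (G.contr e).otail (fun g => dir g.1) x = Quot.mk _ (G.src e)} := by
      ext x; rw [hqv]
    rw [hseth, hsett, cnt_contr_m G e hnl C' _ _ hφh, cnt_contr_m G e hnl C' _ _ hφt]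
    rw [hval, cnt_remove, cnt_remove, cnt_remove, cnt_remove]
    have h1 := hEul (G.src e)
    have h2 := hEul (G.tgt e)
    by_cases heC : e ∈ C
    · by_cases hde : dir e
      · have hh : G.ohead dir e = G.tgt e := by simp [RefGraph.ohead, hde]
        have ht : G.otail dir e = G.src e := by simp [RefGraph.otail, hde]
        rw [if_neg (by rw [hh]; exact fun h => hnl h.2.symm),
          if_pos ⟨heC, hh⟩, if_pos ⟨heC, ht⟩,
          if_neg (by rw [ht]; exact fun h => hnl h.2)]
        have hle1 : 1 ≤ {y ∈ C | G.ohead dir y = G.tgt e}.ncard := cnt_mem_pos _ heC hh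
        have hle2 : 1 ≤ {y ∈ C | G.otail dir y = G.src e}.ncard := cnt_mem_pos _ heC ht
        omega
      · have hh : G.ohead dir e = G.src e := by simp [RefGraph.ohead, hde]
        have ht : G.otail dir e = G.tgt e := by simp [RefGraph.otail, hde]
        rw [if_pos ⟨heC, hh⟩, if_neg (by rw [hh]; exact fun h => hnl h.2),
          if_neg (by rw [ht]; exact fun h => hnl h.2.symm), if_pos ⟨heC, ht⟩]
        have hle1 : 1 ≤ {y ∈ C | G.ohead dir y = G.src e}.ncard := cnt_mem_pos _ heC hh
        have hle2 : 1 ≤ {y ∈ C | G.otail dir y = G.tgt e}.ncard := cnt_mem_pos _ heC ht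
        omega
    · rw [if_neg (fun h => heC h.1), if_neg (fun h => heC h.1),
        if_neg (fun h => heC h.1), if_neg (fun h => heC h.1)]
      omega
  · push_neg at hv
    rw [cnt_contr_other G e C' _ _ hφh v hv.1 hv.2,
      cnt_contr_other G e C' _ _ hφt v hv.1 hv.2, hval, cnt_remove, cnt_remove]
    have hh : G.ohead dir e ≠ v := by
      unfold RefGraph.ohead
      by_cases h : dir e <;> simp [h]
      · exact fun hc => hv.2 hc.symm
      · exact fun hc => hv.1 hc.symm
    have ht : G.otail dir e ≠ v := by
      unfold RefGraph.otail
      by_cases h : dir e <;> simp [h]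
      · exact fun hc => hv.1 hc.symm
      · exact fun hc => hv.2 hc.symm
    rw [if_neg (fun h => hh h.2), if_neg (fun h => ht h.2)]
    have := hEul v
    omega

end BKL
namespace BKL

variable {V E : Type} [Fintype V] [Fintype E]

theorem eul_contr_up (G : RefGraph V E) (e : E) (hnl : G.src e ≠ G.tgt e)
    {C' : Set {x : E // x ≠ e}} {dir' : {x : E // x ≠ e} → Bool}
    (hEul' : Eul (G.contr e) C' dir')
    (htail1 : {x ∈ C' | (G.contr e).otail dir' x = Quot.mk _ (G.src e)}.ncard ≤ 1) :
    ∃ (S : Set E) (dir : E → Bool), Eul G S dir ∧ Subtype.val '' C' ⊆ S ∧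
      S ⊆ Subtype.val '' C' ∪ {e} ∧ ∀ x ∈ C', dir x.1 = dir' x := by
  classical
  set dir₀ : Bool → E → Bool := fun d g => if h : g = e then d else dir' ⟨g, h⟩ with hdir₀
  have hdir : ∀ (d : Bool) (x : {x : E // x ≠ e}), dir₀ d x.1 = dir' x := by
    intro d x
    simp only [hdir₀]
    rw [dif_neg x.2]
  have hφh : ∀ (d : Bool) (x : {x : E // x ≠ e}), (G.contr e).ohead dir' x =
      Quot.mk _ (G.ohead (dir₀ d) x.1) := by
    intro d x
    unfold RefGraph.ohead
    rw [hdir d x]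
    by_cases h : dir' x <;> simp [h, RefGraph.contr]
  have hφt : ∀ (d : Bool) (x : {x : E // x ≠ e}), (G.contr e).otail dir' x =
      Quot.mk _ (G.otail (dir₀ d) x.1) := by
    intro d x
    unfold RefGraph.otail
    rw [hdir d x]
    by_cases h : dir' x <;> simp [h, RefGraph.contr]
  have hhead_eq : ∀ (d d' : Bool) (v : V), {y ∈ Subtype.val '' C' | G.ohead (dir₀ d) y = v} =
      {y ∈ Subtype.val '' C' | G.ohead (dir₀ d') y = v} := by
    intro d d' v
    ext y
    constructor <;> rintro ⟨⟨x, hx, rfl⟩, h2⟩ <;>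
      refine ⟨⟨x, hx, rfl⟩, ?_⟩ <;> unfold RefGraph.ohead at h2 ⊢ <;>
      rw [hdir] at h2 ⊢ <;> exact h2
  have htail_eq : ∀ (d d' : Bool) (v : V), {y ∈ Subtype.val '' C' | G.otail (dir₀ d) y = v} =
      {y ∈ Subtype.val '' C' | G.otail (dir₀ d') y = v} := by
    intro d d' v
    ext y
    constructor <;> rintro ⟨⟨x, hx, rfl⟩, h2⟩ <;>
      refine ⟨⟨x, hx, rfl⟩, ?_⟩ <;> unfold RefGraph.otail at h2 ⊢ <;>
      rw [hdir] at h2 ⊢ <;> exact h2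
  have heC : e ∉ Subtype.val '' C' := by
    rintro ⟨x, _, hx⟩
    exact x.2 hx
  set A1 := {y ∈ Subtype.val '' C' | G.ohead (dir₀ true) y = G.src e}.ncard with hA1
  set A2 := {y ∈ Subtype.val '' C' | G.ohead (dir₀ true) y = G.tgt e}.ncard with hA2
  set B1 := {y ∈ Subtype.val '' C' | G.otail (dir₀ true) y = G.src e}.ncard with hB1
  set B2 := {y ∈ Subtype.val '' C' | G.otail (dir₀ true) y = G.tgt e}.ncard with hB2
  have hsum : A1 + A2 = B1 + B2 := by
    have h1 := cnt_contr_m G e hnl C' _ _ (hφh true)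
    have h2 := cnt_contr_m G e hnl C' _ _ (hφt true)
    have h3 := hEul' (Quot.mk _ (G.src e))
    rw [h1, h2] at h3
    exact h3
  have hB12 : B1 + B2 ≤ 1 := by
    have h2 := cnt_contr_m G e hnl C' _ _ (hφt true)
    rw [h2] at htail1
    exact htail1
  -- the balance at all non-endpoint vertices, for any chosen direction of `e`
  have hother : ∀ (d : Bool) (v : V), v ≠ G.src e → v ≠ G.tgt e →
      {y ∈ Subtype.val '' C' | G.ohead (dir₀ d) y = v}.ncard =
      {y ∈ Subtype.val '' C' | G.otail (dir₀ d) y = v}.ncard := by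
    intro d v hv1 hv2
    have h1 := cnt_contr_other G e C' _ _ (hφh d) v hv1 hv2
    have h2 := cnt_contr_other G e C' _ _ (hφt d) v hv1 hv2
    have h3 := hEul' (Quot.mk _ v)
    rw [h1, h2] at h3
    exact h3
  by_cases hbal : A1 = B1
  · -- no fixing needed
    refine ⟨Subtype.val '' C', dir₀ true, ?_, le_refl _, Set.subset_union_left, fun x _ => hdir true x⟩
    intro v
    by_cases hv1 : v = G.src e
    · subst hv1; rw [← hA1, ← hB1, hbal]
    by_cases hv2 : v = G.tgt e
    · subst hv2; rw [← hA2, ← hB2]; omega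
    exact hother true v hv1 hv2
  · -- need the edge e to repair the imbalance
    have hcases : (A1 = 1 ∧ B1 = 0 ∧ A2 = 0 ∧ B2 = 1) ∨
        (A1 = 0 ∧ B1 = 1 ∧ A2 = 1 ∧ B2 = 0) := by omega
    rcases hcases with ⟨h1, h2, h3, h4⟩ | ⟨h1, h2, h3, h4⟩
    · -- extra head at src: orient e as src → tgt (dir e = true)
      have hde : dir₀ true e = true := by simp [hdir₀]
      have hh : G.ohead (dir₀ true) e = G.tgt e := by simp [RefGraph.ohead, hde]
      have ht : G.otail (dir₀ true) e = G.src e := by simp [RefGraph.otail, hde]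
      refine ⟨insert e (Subtype.val '' C'), dir₀ true, ?_,
        Set.subset_insert _ _, ?_, fun x _ => hdir true x⟩
      · intro v
        rw [cnt_insert _ _ heC, cnt_insert _ _ heC]
        by_cases hv1 : v = G.src e
        · subst hv1
          rw [if_neg (by rw [hh]; exact fun h => hnl h.symm), if_pos ht]
          rw [← hA1, ← hB1]
          omega
        by_cases hv2 : v = G.tgt e
        · subst hv2
          rw [if_pos hh, if_neg (by rw [ht]; exact hnl)]
          rw [← hA2, ← hB2]
          omega
        · rw [if_neg (by rw [hh]; exact fun h => hv2 h.symm),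
            if_neg (by rw [ht]; exact fun h => hv1 h.symm)]
          have := hother true v hv1 hv2
          omega
      · intro x hx
        rcases hx with rfl | hx
        · exact Or.inr rfl
        · exact Or.inl hx
    · -- extra tail at src: orient e as tgt → src (dir e = false)
      have hde : dir₀ false e = false := by simp [hdir₀]
      have hh : G.ohead (dir₀ false) e = G.src e := by simp [RefGraph.ohead, hde]
      have ht : G.otail (dir₀ false) e = G.tgt e := by simp [RefGraph.otail, hde]
      refine ⟨insert e (Subtype.val '' C'), dir₀ false, ?_,
        Set.subset_insert _ _, ?_, fun x _ => hdir false x⟩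
      · intro v
        rw [cnt_insert _ _ heC, cnt_insert _ _ heC]
        by_cases hv1 : v = G.src e
        · subst hv1
          rw [if_pos hh, if_neg (by rw [ht]; exact fun h => hnl h.symm)]
          rw [hhead_eq false true, htail_eq false true, ← hA1, ← hB1]
          omega
        by_cases hv2 : v = G.tgt e
        · subst hv2
          rw [if_neg (by rw [hh]; exact fun h => hnl h), if_pos ht]
          rw [hhead_eq false true, htail_eq false true, ← hA2, ← hB2]
          omega
        · rw [if_neg (by rw [hh]; exact fun h => hv1 h.symm),
            if_neg (by rw [ht]; exact fun h => hv2 h.symm)]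
          have := hother false v hv1 hv2
          omega
      · intro x hx
        rcases hx with rfl | hx
        · exact Or.inr rfl
        · exact Or.inl hx

end BKL
namespace BKL

variable {V E : Type} [Fintype V] [Fintype E]

theorem potcycle_exists_contr [LinearOrder E] (G : RefGraph V E) (e : E)
    (hmax : ∀ f : E, f ≤ e) (hnl : G.src e ≠ G.tgt e)
    (F₀ : E → Bool × Bool) (hbi : F₀ e = (true, true)) (f : E) (hfe : f ≠ e) :
    (∃ C dir, G.PotCycle F₀ C dir ∧ f ∈ C ∧ ∀ g ∈ C, f ≤ g) ↔
    (∃ C' dir', (G.contr e).PotCycle (fun g => F₀ g.1) C' dir' ∧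
      (⟨f, hfe⟩ : {x : E // x ≠ e}) ∈ C' ∧
      ∀ g ∈ C', (⟨f, hfe⟩ : {x : E // x ≠ e}) ≤ g) := by
  letI : Fintype (Quot fun a b : V => a = G.src e ∧ b = G.tgt e) := Fintype.ofFinite _
  constructor
  · rintro ⟨C, dir, ⟨hcyc, hEul, hpres⟩, hfC, hmin⟩
    have hEul : Eul G C dir := hEul
    have hEul' := eul_contr_down G e hnl hEul
    have hf' : (⟨f, hfe⟩ : {x : E // x ≠ e}) ∈ {x : {x : E // x ≠ e} | x.1 ∈ C} := hfC
    obtain ⟨C₀, hC₀sub, hfC₀, hC₀cyc, hC₀Eul⟩ :=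
      eul_to_cycle (G.contr e) hf' hEul'
    refine ⟨C₀, fun g => dir g.1, ⟨hC₀cyc, hC₀Eul, ?_⟩, hfC₀, ?_⟩
    · intro x hx
      exact hpres x.1 (hC₀sub hx)
    · intro g hg
      exact Subtype.mk_le_mk.mpr (hmin g.1 (hC₀sub hg))
  · rintro ⟨C', dir', ⟨hcyc', hEul', hpres'⟩, hfC', hmin'⟩
    have hEul' : Eul (G.contr e) C' dir' := hEul'
    have hminE : ∀ D ⊆ C', D.Nonempty → Eul (G.contr e) D dir' → D = C' := by
      intro D hD hDne hDEul
      by_contra hne'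
      exact hcyc'.2.2 D (Set.ssubset_iff_subset_ne.mpr ⟨hD, hne'⟩) hDne
        (fun Cu hCu => cut_inter_eul (G.contr e) hDEul hCu)
    obtain ⟨a, l, hwalk, hlne, htnd, hset⟩ :=
      extract_cycle (G.contr e) ⟨_, hfC'⟩ hEul' hminE
    have htail1 : {x ∈ C' | (G.contr e).otail dir' x = Quot.mk _ (G.src e)}.ncard ≤ 1 := by
      rw [← hset]
      have hh : {x ∈ {x | x ∈ l} | (G.contr e).otail dir' x = Quot.mk _ (G.src e)} =
          {x | x ∈ l ∧ (G.contr e).otail dir' x = Quot.mk _ (G.src e)} := rfl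
      rw [hh, ncard_list_filter l htnd.of_map ((G.contr e).otail dir')
        (Quot.mk _ (G.src e))]
      exact List.nodup_iff_count_le_one.mp htnd _
    obtain ⟨S, dir, hSEul, hsub1, hsub2, hdirS⟩ := eul_contr_up G e hnl hEul' htail1
    have hfS : f ∈ S := hsub1 ⟨⟨f, hfe⟩, hfC', rfl⟩
    obtain ⟨C₀, hC₀sub, hfC₀, hC₀cyc, hC₀Eul⟩ := eul_to_cycle G hfS hSEul
    refine ⟨C₀, dir, ⟨hC₀cyc, hC₀Eul, ?_⟩, hfC₀, ?_⟩
    · intro g hg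
      rcases hsub2 (hC₀sub hg) with ⟨x, hx, rfl⟩ | hge
      · rw [hdirS x hx]
        exact hpres' x hx
      · have hge' : g = e := hge
        subst hge'
        rw [hbi]
        by_cases h : dir g <;> simp [h]
    · intro g hg
      rcases hsub2 (hC₀sub hg) with ⟨x, hx, rfl⟩ | hge
      · exact Subtype.mk_le_mk.mp (hmin' x hx)
      · have hge' : g = e := hge
        subst hge'
        exact hmax f

end BKL

/-- bioriented case of the key lemma: if the maximum edge `e` is
neither an isthmus nor a loop and `e` is bioriented in the fourientation `O`,
then `L^o(O) = L^o(O/e)`, `L^b(O) = L^b(O/e)`, `I^o(O) = I^o(O/e)` and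
`I^u(O) = I^u(O/e)`. -/
theorem bioriented_contract_lemma {V E : Type} [Fintype V] [Fintype E]
    [LinearOrder E] (G : RefGraph V E) (σu σb : E → Bool) (e : E)
    (hmax : ∀ f : E, f ≤ e) (hni : ¬ G.IsCut {e}) (hnl : G.src e ≠ G.tgt e)
    (F : E → Bool × Bool) (hbi : F e = (true, true)) :
    G.Lo F = Subtype.val '' (G.contr e).Lo (fun f => F f.1) ∧
    G.Lb σb F =
      Subtype.val '' (G.contr e).Lb (fun f => σb f.1) (fun f => F f.1) ∧
    G.Io F = Subtype.val '' (G.contr e).Io (fun f => F f.1) ∧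
    G.Iu σu F =
      Subtype.val '' (G.contr e).Iu (fun f => σu f.1) (fun f => F f.1) := by
  classical
  refine ⟨?_, ?_, ?_, ?_⟩
  · -- L^o
    ext f
    simp only [RefGraph.Lo, Set.mem_setOf_eq, Set.mem_image]
    constructor
    · rintro ⟨hor, C, dir, hpc, hfC, hmin⟩
      have hfe : f ≠ e := by
        intro h
        rw [h, hbi] at hor
        exact hor rfl
      exact ⟨⟨f, hfe⟩, ⟨hor,
        (BKL.potcycle_exists_contr G e hmax hnl F hbi f hfe).mp ⟨C, dir, hpc, hfC, hmin⟩⟩,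
        rfl⟩
    · rintro ⟨x, ⟨hor, hex⟩, rfl⟩
      exact ⟨hor, (BKL.potcycle_exists_contr G e hmax hnl F hbi x.1 x.2).mpr hex⟩
  · -- L^b
    ext f
    simp only [RefGraph.Lb, Set.mem_setOf_eq, Set.mem_image]
    constructor
    · rintro ⟨hbif, C, dir, hpc, hfC, hmin⟩
      by_cases hfe : f = e
      · exfalso
        have hC : C = {f} := by
          apply Set.eq_singleton_iff_unique_mem.mpr
          refine ⟨hfC, fun g hg => le_antisymm (by rw [hfe]; exact hmax g) (hmin g hg)⟩
        have hnl' : G.src f ≠ G.tgt f := by rw [hfe]; exact hnl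
        have hEulC := hpc.2.1
        have h := hEulC (G.src f)
        rw [hC] at h
        by_cases hde : dir f
        · have e1 : {x ∈ ({f} : Set E) | G.ohead dir x = G.src f} = ∅ := by
            ext x
            constructor
            · rintro ⟨rfl, hP⟩
              simp only [RefGraph.ohead, hde, if_true] at hP
              exact hnl' hP.symm
            · rintro h'; exact absurd h' (Set.notMem_empty x)
          have e2 : {x ∈ ({f} : Set E) | G.otail dir x = G.src f} = {f} := by
            ext x
            constructor
            · rintro ⟨h1, _⟩; exact h1
            · rintro rfl
              exact ⟨rfl, by simp [RefGraph.otail, hde]⟩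
          rw [e1, e2] at h
          simp at h
        · have e1 : {x ∈ ({f} : Set E) | G.ohead dir x = G.src f} = {f} := by
            ext x
            constructor
            · rintro ⟨h1, _⟩; exact h1
            · rintro rfl
              exact ⟨rfl, by simp [RefGraph.ohead, hde]⟩
          have e2 : {x ∈ ({f} : Set E) | G.otail dir x = G.src f} = ∅ := by
            ext x
            constructor
            · rintro ⟨rfl, hP⟩
              simp only [RefGraph.otail, hde, if_false] at hP
              exact hnl' hP.symm
            · rintro h'; exact absurd h' (Set.notMem_empty x)
          rw [e1, e2] at h
          simp at h
      · have h := (BKL.potcycle_exists_contr G e hmax hnl (RefGraph.remDir F f (σb f))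
          (by unfold RefGraph.remDir; rw [Function.update_of_ne (Ne.symm hfe)]; exact hbi)
          f hfe).mp ⟨C, dir, hpc, hfC, hmin⟩
        rw [BKL.remDir_restrict F f hfe (σb f)] at h
        exact ⟨⟨f, hfe⟩, ⟨hbif, h⟩, rfl⟩
    · rintro ⟨x, ⟨hbif, hex⟩, rfl⟩
      refine ⟨hbif, ?_⟩
      erw [← BKL.remDir_restrict F x.1 x.2 (σb x.1)] at hex
      exact (BKL.potcycle_exists_contr G e hmax hnl (RefGraph.remDir F x.1 (σb x.1))
        (by unfold RefGraph.remDir; rw [Function.update_of_ne (Ne.symm x.2)]; exact hbi)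
        x.1 x.2).mpr hex
  · -- I^o
    ext f
    simp only [RefGraph.Io, Set.mem_setOf_eq, Set.mem_image]
    constructor
    · rintro ⟨hor, hex⟩
      have hfe : f ≠ e := by
        intro h
        rw [h, hbi] at hor
        exact hor rfl
      exact ⟨⟨f, hfe⟩, ⟨hor, (BKL.potcut_exists_contr G e F hbi f hfe).mp hex⟩, rfl⟩
    · rintro ⟨x, ⟨hor, hex⟩, rfl⟩
      exact ⟨hor, (BKL.potcut_exists_contr G e F hbi x.1 x.2).mpr hex⟩
  · -- I^u
    ext f
    simp only [RefGraph.Iu, Set.mem_setOf_eq, Set.mem_image]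
    constructor
    · rintro ⟨hFf, hex⟩
      have hfe : f ≠ e := by
        intro h
        rw [h, hbi] at hFf
        simp at hFf
      have h := (BKL.potcut_exists_contr G e (RefGraph.addDir F f (σu f))
        (by unfold RefGraph.addDir; rw [Function.update_of_ne (Ne.symm hfe)]; exact hbi)
        f hfe).mp hex
      rw [BKL.addDir_restrict F f hfe (σu f)] at h
      exact ⟨⟨f, hfe⟩, ⟨hFf, h⟩, rfl⟩
    · rintro ⟨x, ⟨hFf, hex⟩, rfl⟩
      refine ⟨hFf, ?_⟩
      erw [← BKL.addDir_restrict F x.1 x.2 (σu x.1)] at hex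
      exact (BKL.potcut_exists_contr G e (RefGraph.addDir F x.1 (σu x.1))
        (by unfold RefGraph.addDir; rw [Function.update_of_ne (Ne.symm x.2)]; exact hbi)
        x.1 x.2).mpr hex
end

section
/- Let G be a graph whose maximum edge e is neither an isthmus nor a loop, and let O be a fourientation of G in which e is unoriented. Then I^o(O) = I^o(O−e), I^u(O) = I^u(O−e), L^o(O) = L^o(O−e), and L^b(O) = L^b(O−e). -/
open scoped Classical

/-- A multigraph with a fixed reference orientation: each edge `e` has a
source `src e` and a target `tgt e` (the positive direction `e⁺ = (src e, tgt e)`). -/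
structure FGraph (V E : Type) where
  src : E → V
  tgt : E → V

namespace FGraph

variable {V E : Type} (G : FGraph V E)

/-- Two vertices are joined by some edge of `S`. -/
def step (S : Set E) (a b : V) : Prop :=
  ∃ e ∈ S, (G.src e = a ∧ G.tgt e = b) ∨ (G.src e = b ∧ G.tgt e = a)

/-- `κ(S)`: the number of connected components of the spanning subgraph `(V, S)`. -/
noncomputable def kappa (S : Set E) : ℕ :=
  Nat.card (Quot (G.step S))

/-- A cut of `G`: a minimal nonempty edge set whose removal increases the
number of connected components. -/
def IsCut (C : Set E) : Prop :=
  C.Nonempty ∧ G.kappa Cᶜ > G.kappa Set.univ ∧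
    ∀ C' : Set E, C' ⊂ C → C'.Nonempty → ¬ (G.kappa C'ᶜ > G.kappa Set.univ)

/-- A cycle of `G`: a minimal nonempty edge set meeting no cut of `G` in
precisely one element. -/
def IsCycle (C : Set E) : Prop :=
  C.Nonempty ∧ (∀ Cu : Set E, G.IsCut Cu → (Cu ∩ C).ncard ≠ 1) ∧
    ∀ C' : Set E, C' ⊂ C → C'.Nonempty →
      ¬ (∀ Cu : Set E, G.IsCut Cu → (Cu ∩ C').ncard ≠ 1)

/-- Head of edge `e` under orientation `O` (`O e = true` means the reference
direction `src e → tgt e`). -/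
def ohead (O : E → Bool) (e : E) : V := if O e then G.tgt e else G.src e

/-- Tail of edge `e` under orientation `O`. -/
def otail (O : E → Bool) (e : E) : V := if O e then G.src e else G.tgt e

/-- Edge `e` crosses the vertex set `U` (exactly one endpoint in `U`). -/
def crossing (U : Set V) (e : E) : Prop := G.src e ∈ U ↔ G.tgt e ∉ U

/-- A directed cut of the orientation `O`: a cut all of whose edges are
oriented consistently out of some vertex set `U`. -/
def IsDirCut (O : E → Bool) (C : Set E) : Prop :=
  G.IsCut C ∧ ∃ U : Set V, (∀ e, e ∈ C ↔ G.crossing U e) ∧ ∀ e ∈ C, G.otail O e ∈ U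

/-- A directed cycle of the orientation `O`: a cycle oriented consistently,
i.e. in-degree equals out-degree at each vertex within the cycle. -/
def IsDirCycle (O : E → Bool) (C : Set E) : Prop :=
  G.IsCycle C ∧ ∀ v : V,
    {e ∈ C | G.ohead O e = v}.ncard = {e ∈ C | G.otail O e = v}.ncard

section Activities

variable [LinearOrder E]

/-- `Î(S)`: cut active edges of the spanning subgraph `S`. -/
def Iact (S : Set E) : Set E :=
  {e | ∃ C : Set E, G.IsCut C ∧ e ∈ C ∧ (∀ f ∈ C, f ≠ e → f ∉ S) ∧ ∀ f ∈ C, e ≤ f}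

/-- `L̂(S)`: cycle active edges of the spanning subgraph `S`. -/
def Lact (S : Set E) : Set E :=
  {e | ∃ C : Set E, G.IsCycle C ∧ e ∈ C ∧ (∀ f ∈ C, f = e ∨ f ∈ S) ∧ ∀ f ∈ C, e ≤ f}

/-- `I(O)`: cut active edges of the orientation `O`. -/
def Ior (O : E → Bool) : Set E :=
  {e | ∃ C : Set E, G.IsDirCut O C ∧ e ∈ C ∧ ∀ f ∈ C, e ≤ f}

/-- `L(O)`: cycle active edges of the orientation `O`. -/
def Lor (O : E → Bool) : Set E :=
  {e | ∃ C : Set E, G.IsDirCycle O C ∧ e ∈ C ∧ ∀ f ∈ C, e ≤ f}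

end Activities

/-- The Tutte polynomial via the corank-nullity expansion, evaluated in a
commutative ring. -/
noncomputable def tutte [Fintype V] [Fintype E] (R : Type) [CommRing R] (x y : R) : R :=
  ∑ S : Finset E, (x - 1) ^ (G.kappa ↑S - G.kappa Set.univ) *
    (y - 1) ^ (S.card + G.kappa ↑S - Fintype.card V)

/-! ### Fourientations.
A fourientation is `F : E → Bool × Bool`, recording whether `e⁺` resp. `e⁻`
belongs to the fourientation. -/

/-- A potential cut of the fourientation `F`: a directed cut each of whose
edges is unoriented in `F` or oriented in the cut direction (out of `U`). -/
def PotCut (F : E → Bool × Bool) (C : Set E) : Prop :=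
  G.IsCut C ∧ ∃ U : Set V, (∀ e, e ∈ C ↔ G.crossing U e) ∧
    ∀ e ∈ C, (G.src e ∈ U → (F e).2 = false) ∧ (G.src e ∉ U → (F e).1 = false)

/-- A potential cycle of the fourientation `F`, with cyclic direction `dir`:
a consistently directed cycle each of whose edges has its `dir`-direction
present in `F` (so each edge is bioriented or oriented in the cycle direction). -/
def PotCycle (F : E → Bool × Bool) (C : Set E) (dir : E → Bool) : Prop :=
  G.IsCycle C ∧
    (∀ v : V, {e ∈ C | G.ohead dir e = v}.ncard = {e ∈ C | G.otail dir e = v}.ncard) ∧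
    ∀ e ∈ C, (if dir e then (F e).1 else (F e).2) = true

/-- Add the direction `d` of edge `e` to the fourientation `F`. -/
def addDir [DecidableEq E] (F : E → Bool × Bool) (e : E) (d : Bool) : E → Bool × Bool :=
  Function.update F e (if d then (true, (F e).2) else ((F e).1, true))

/-- Remove the direction `d` of edge `e` from the fourientation `F`. -/
def remDir [DecidableEq E] (F : E → Bool × Bool) (e : E) (d : Bool) : E → Bool × Bool :=
  Function.update F e (if d then (false, (F e).2) else ((F e).1, false))

/-- `ᵉO`: toggle the status of the edge `e` in the fourientation `F`. -/
def toggle [DecidableEq E] (F : E → Bool × Bool) (e : E) : E → Bool × Bool :=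
  Function.update F e ((F e).2, (F e).1)

section FourActivities

variable [LinearOrder E]

/-- `I^o(O)`: oriented edges that are minimal in some potential cut. -/
def Io (F : E → Bool × Bool) : Set E :=
  {f | (F f).1 ≠ (F f).2 ∧ ∃ C : Set E, G.PotCut F C ∧ f ∈ C ∧ ∀ g ∈ C, f ≤ g}

/-- `L^o(O)`: oriented edges that are minimal in some potential cycle. -/
def Lo (F : E → Bool × Bool) : Set E :=
  {f | (F f).1 ≠ (F f).2 ∧
    ∃ (C : Set E) (dir : E → Bool), G.PotCycle F C dir ∧ f ∈ C ∧ ∀ g ∈ C, f ≤ g}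

/-- `I^u(O)`: unoriented edges `f` minimal in some potential cut of
`O ∪ {f^{σᵤ(f)}}`. -/
def Iu (σu : E → Bool) (F : E → Bool × Bool) : Set E :=
  {f | F f = (false, false) ∧
    ∃ C : Set E, G.PotCut (addDir F f (σu f)) C ∧ f ∈ C ∧ ∀ g ∈ C, f ≤ g}

/-- `L^b(O)`: bioriented edges `f` minimal in some potential cycle of
`O \ {f^{σ_b(f)}}`. -/
def Lb (σb : E → Bool) (F : E → Bool × Bool) : Set E :=
  {f | F f = (true, true) ∧
    ∃ (C : Set E) (dir : E → Bool),
      G.PotCycle (remDir F f (σb f)) C dir ∧ f ∈ C ∧ ∀ g ∈ C, f ≤ g}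

end FourActivities

/-- The deletion `G − e`. -/
def del (e : E) : FGraph V {f : E // f ≠ e} :=
  ⟨fun f => G.src f.1, fun f => G.tgt f.1⟩

/-- The contraction `G/e`: identify the endpoints of `e` and remove `e`. -/
def contr (e : E) : FGraph (Quot (fun a b => a = G.src e ∧ b = G.tgt e)) {f : E // f ≠ e} :=
  ⟨fun f => Quot.mk _ (G.src f.1), fun f => Quot.mk _ (G.tgt f.1)⟩

/-! ### Potential walks in a fourientation. A walk step is a pair `(e, d)` of an
edge and a chosen direction (`d = true` for the reference direction). -/

/-- Tail of the directed edge `(e, d)`. -/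
def ftail (p : E × Bool) : V := if p.2 then G.src p.1 else G.tgt p.1

/-- Head of the directed edge `(e, d)`. -/
def fhead (p : E × Bool) : V := if p.2 then G.tgt p.1 else G.src p.1

/-- The direction `d` of `e` is present in the fourientation `F`. -/
def present (F : E → Bool × Bool) (p : E × Bool) : Prop :=
  (if p.2 then (F p.1).1 else (F p.1).2) = true

/-- A potential walk of the fourientation `F` from `a` to `b`: each step uses
a direction present in `F` (so each edge is bioriented or oriented
consistently with the walk). -/
def IsPWalk (F : E → Bool × Bool) : V → List (E × Bool) → V → Prop
  | a, [], b => a = b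
  | a, p :: rest, b => G.ftail p = a ∧ present F p ∧ IsPWalk F (G.fhead p) rest b

/-- A potential path: a potential walk visiting pairwise distinct vertices. -/
def IsPPath (F : E → Bool × Bool) (a : V) (w : List (E × Bool)) (b : V) : Prop :=
  G.IsPWalk F a w b ∧ (a :: w.map G.fhead).Nodup

end FGraph

/-!
A potential cut, resp. potential cycle, with minimum `f` exists iff there is a relaxed
certificate that no longer mentions cuts or cycles of the graph: a vertex set `U` with `f ∈ δ(U)`
and every edge of `δ(U)` unoriented or leaving `U` (such a `δ(U)` contains a bond through `f`
with the same sides), resp. a balanced set of present directed edges through `f` (it contains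
a simple directed cycle through `f`, which is a cycle of the graph). These certificates pass
unchanged between `G` and `G - e`: the unoriented edge `e` may lie on every `δ(U)` and on no
potential cycle, and as the maximum edge it never disturbs the minimality of `f ≠ e`. The edge
`e` itself lies in none of the four sets, since a potential cut with minimum `e` would be the
isthmus `{e}`.
-/

namespace FGraph

variable {V E : Type} (G : FGraph V E)

abbrev conn (S : Set E) : V → V → Prop := Relation.EqvGen (G.step S)

variable {G}

lemma conn.mono {S T : Set E} (h : S ⊆ T) {a b : V} (hab : G.conn S a b) : G.conn T a b :=
  Relation.EqvGen.mono (fun _ _ ⟨g, hg, hends⟩ => ⟨g, h hg, hends⟩) a b hab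

lemma conn_of_mem {S : Set E} {g : E} (hg : g ∈ S) : G.conn S (G.src g) (G.tgt g) :=
  .rel _ _ ⟨g, hg, .inl ⟨rfl, rfl⟩⟩

lemma crossing_compl {U : Set V} {g : E} : G.crossing Uᶜ g ↔ G.crossing U g := by
  unfold crossing; simp only [Set.mem_compl_iff]; tauto

lemma mem_iff_of_conn {U : Set V} {S : Set E} (hS : ∀ g ∈ S, ¬ G.crossing U g) {a b : V}
    (hab : G.conn S a b) : a ∈ U ↔ b ∈ U := by
  induction hab with
  | rel x y hxy =>
      obtain ⟨g, hg, ⟨rfl, rfl⟩ | ⟨rfl, rfl⟩⟩ := hxy <;> unfold crossing at hS <;>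
        have := hS g hg <;> tauto
  | refl => rfl
  | symm _ _ _ ih => exact ih.symm
  | trans _ _ _ _ _ ih₁ ih₂ => exact ih₁.trans ih₂

lemma not_mem_of_crossing_class {S : Set E} {a : V} {g : E}
    (hg : G.crossing {v | G.conn S a v} g) : g ∉ S := by
  intro hgS
  have hconn := conn_of_mem (G := G) hgS
  have : G.conn S a (G.src g) ↔ G.conn S a (G.tgt g) :=
    ⟨(.trans _ _ _ · hconn), (.trans _ _ _ · (.symm _ _ hconn))⟩
  unfold crossing at hg
  simp only [Set.mem_ofPred_eq] at hg
  tauto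

def classMap (S : Set E) : Quot (G.step S) → Quot (G.step Set.univ) :=
  Quot.map id fun _ _ ⟨g, _, hends⟩ => ⟨g, Set.mem_univ g, hends⟩

lemma classMap_surjective (S : Set E) : Function.Surjective (G.classMap S) :=
  Quot.ind fun v => ⟨Quot.mk _ v, rfl⟩

lemma kappa_univ_le [Finite V] (S : Set E) : G.kappa Set.univ ≤ G.kappa S :=
  Nat.card_le_card_of_surjective _ (classMap_surjective S)

lemma kappa_eq_kappa_univ_iff [Finite V] {S : Set E} :
    G.kappa S = G.kappa Set.univ ↔ ∀ g, G.conn S (G.src g) (G.tgt g) := by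
  have hsurj := classMap_surjective (G := G) S
  rw [kappa, kappa, ← and_iff_right (b := _ = Nat.card _) hsurj,
    ← Nat.bijective_iff_surjective_and_card, Function.Bijective, and_iff_left hsurj]
  constructor
  · intro hinj g
    exact Quot.eq.mp <| hinj <| Quot.sound ⟨g, Set.mem_univ g, .inl ⟨rfl, rfl⟩⟩
  · intro hS x y
    induction x using Quot.ind with | _ x
    induction y using Quot.ind with | _ y
    intro hxy
    replace hxy : G.conn Set.univ x y := Quot.eq.mp hxy
    refine Quot.eq.mpr ?_
    induction hxy with
    | rel a b hab =>
        obtain ⟨g, -, ⟨rfl, rfl⟩ | ⟨rfl, rfl⟩⟩ := hab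
        exacts [hS g, .symm _ _ (hS g)]
    | refl => exact .refl _
    | symm _ _ _ ih => exact .symm _ _ ih
    | trans _ _ _ _ _ ih₁ ih₂ => exact .trans _ _ _ ih₁ ih₂

lemma kappa_univ_lt_crossing [Finite V] {U : Set V} {f : E} (hf : G.crossing U f) :
    G.kappa Set.univ < G.kappa {g | G.crossing U g}ᶜ := by
  refine (kappa_univ_le _).lt_of_ne fun h => ?_
  have := mem_iff_of_conn (fun g hg => hg) (kappa_eq_kappa_univ_iff.mp h.symm f)
  unfold crossing at hf
  tauto

lemma isCut_crossing_of_conn [Finite V] {X : Set V} {a b : V} {g₀ : E}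
    (hg₀ : G.crossing X g₀)
    (hends : ∀ g, G.crossing X g →
      G.conn {g | G.crossing X g}ᶜ a (G.src g) ∧ G.conn {g | G.crossing X g}ᶜ b (G.tgt g) ∨
      G.conn {g | G.crossing X g}ᶜ a (G.tgt g) ∧ G.conn {g | G.crossing X g}ᶜ b (G.src g)) :
    G.IsCut {g | G.crossing X g} := by
  refine ⟨⟨g₀, hg₀⟩, kappa_univ_lt_crossing hg₀, fun D hD _ hlt => hlt.ne' ?_⟩
  have hmono {x y : V} : G.conn {g | G.crossing X g}ᶜ x y → G.conn Dᶜ x y :=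
    conn.mono (Set.compl_subset_compl.mpr hD.subset)
  have hjoin {g : E} (hg : G.crossing X g) (hab : G.conn Dᶜ a b) :
      G.conn Dᶜ (G.src g) (G.tgt g) := by
    rcases hends g hg with ⟨ha, hb⟩ | ⟨ha, hb⟩
    · exact .trans _ _ _ (.symm _ _ (hmono ha)) (.trans _ _ _ hab (hmono hb))
    · exact .symm _ _ (.trans _ _ _ (.symm _ _ (hmono ha)) (.trans _ _ _ hab (hmono hb)))
  obtain ⟨g₁, hg₁, hg₁D⟩ := Set.exists_of_ssubset hD
  have hab : G.conn Dᶜ a b := by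
    have h₁ : G.conn Dᶜ (G.src g₁) (G.tgt g₁) := conn_of_mem hg₁D
    rcases hends g₁ hg₁ with ⟨ha, hb⟩ | ⟨ha, hb⟩
    · exact .trans _ _ _ (hmono ha) (.trans _ _ _ h₁ (.symm _ _ (hmono hb)))
    · exact .trans _ _ _ (hmono ha) (.trans _ _ _ (.symm _ _ h₁) (.symm _ _ (hmono hb)))
  refine kappa_eq_kappa_univ_iff.mpr fun g => ?_
  by_cases hgD : g ∈ D
  · exact hjoin (hD.subset hgD) hab
  · exact conn_of_mem hgD

lemma exists_isCut_subset_crossing [Finite V] {U : Set V} {f : E} (hf : G.crossing U f) :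
    ∃ U' : Set V, G.IsCut {g | G.crossing U' g} ∧ G.crossing U' f ∧
      ∀ g, G.crossing U' g → G.crossing U g ∧ (G.src g ∈ U' ↔ G.src g ∈ U) := by
  wlog hfU : G.src f ∈ U generalizing U
  · obtain ⟨U', hcut, hf', hsub⟩ := this (crossing_compl.mpr hf) hfU
    refine ⟨U'ᶜ, by simpa only [crossing_compl] using hcut, crossing_compl.mpr hf',
      fun g hg => ?_⟩
    obtain ⟨hgU, hside⟩ := hsub g (crossing_compl.mp hg)
    simp only [Set.mem_compl_iff] at hside ⊢
    exact ⟨crossing_compl.mp hgU, by tauto⟩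
  -- `δ(B) ⊆ δ(A) ⊆ δ(U)`, and each edge of `δ(B)` joins the class `B` to the class `A`.
  set A := {v | G.conn {g | G.crossing U g}ᶜ (G.src f) v}
  set B := {v | G.conn {g | G.crossing A g}ᶜ (G.tgt f) v}
  have hAU : A ⊆ U := fun v hv => (mem_iff_of_conn (fun _ hg => hg) hv).mp hfU
  have hA {g : E} (hg : G.crossing A g) : G.crossing U g :=
    not_not.mp (not_mem_of_crossing_class hg)
  have hB {g : E} (hg : G.crossing B g) : G.crossing A g :=
    not_not.mp (not_mem_of_crossing_class hg)
  have hBA {v : V} (hv : v ∈ B) : v ∉ A := fun hvA =>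
    hf.mp hfU (hAU ((mem_iff_of_conn (fun _ hg => hg) hv).mpr hvA))
  have hends {g : E} (hg : G.crossing B g) :
      G.src g ∈ B ∧ G.tgt g ∈ A ∨ G.tgt g ∈ B ∧ G.src g ∈ A := by
    have := @hBA (G.src g); have := @hBA (G.tgt g); have := hB hg
    unfold crossing at hg this; tauto
  have hfB : G.crossing B f := by
    have hfA : G.src f ∈ A := .refl _
    have hfB : G.tgt f ∈ B := .refl _
    have := @hBA (G.src f)
    unfold crossing; tauto
  have hcut : G.IsCut {g | G.crossing B g} := by
    refine isCut_crossing_of_conn (a := G.tgt f) (b := G.src f) hfB fun g hg => ?_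
    have hBA' : {g | G.crossing A g}ᶜ ⊆ {g | G.crossing B g}ᶜ :=
      Set.compl_subset_compl.mpr fun _ => hB
    have hUB : {g | G.crossing U g}ᶜ ⊆ {g | G.crossing B g}ᶜ :=
      Set.compl_subset_compl.mpr fun _ hg => hA (hB hg)
    rcases hends hg with ⟨h₁, h₂⟩ | ⟨h₁, h₂⟩
    · exact .inl ⟨h₁.mono hBA', h₂.mono hUB⟩
    · exact .inr ⟨h₁.mono hBA', h₂.mono hUB⟩
  refine ⟨Bᶜ, by simpa only [crossing_compl] using hcut, crossing_compl.mpr hfB,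
    fun g hg => ⟨hA (hB (crossing_compl.mp hg)), ?_⟩⟩
  have hgU := hA (hB (crossing_compl.mp hg))
  have := @hAU (G.src g); have := @hAU (G.tgt g); have := @hBA (G.src g)
  unfold crossing at hgU
  rcases hends (crossing_compl.mp hg) with ⟨h₁, h₂⟩ | ⟨h₁, h₂⟩ <;>
    simp only [Set.mem_compl_iff] <;> tauto

lemma exists_eq_crossing_of_isCut [Finite V] {C : Set E} (hC : G.IsCut C) :
    ∃ U : Set V, C = {g | G.crossing U g} := by
  obtain ⟨-, hlt, hmin⟩ := hC
  obtain ⟨g, hg⟩ : ∃ g, ¬ G.conn Cᶜ (G.src g) (G.tgt g) := by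
    by_contra! h
    exact hlt.ne' (kappa_eq_kappa_univ_iff.mpr h)
  set U := {v | G.conn Cᶜ (G.src g) v}
  have hsub : {g | G.crossing U g} ⊆ C := fun _ hg' => not_not.mp (not_mem_of_crossing_class hg')
  have hgU : G.crossing U g := by
    have : G.src g ∈ U := .refl _
    exact ⟨fun _ => hg, fun _ => this⟩
  refine ⟨U, by_contra fun hne => ?_⟩
  exact hmin _ (hsub.ssubset_of_ne (Ne.symm hne)) ⟨g, hgU⟩ (kappa_univ_lt_crossing hgU)

variable (G) in
/-- A potential cut `δ(U)`, without requiring `δ(U)` to be a cut. -/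
def PotCocycle (F : E → Bool × Bool) (U : Set V) : Prop :=
  ∀ g, G.crossing U g →
    (G.src g ∈ U → (F g).2 = false) ∧ (G.src g ∉ U → (F g).1 = false)

lemma exists_potCut_min_iff [Finite V] [LinearOrder E] {F : E → Bool × Bool} {f : E} :
    (∃ C, G.PotCut F C ∧ f ∈ C ∧ ∀ g ∈ C, f ≤ g) ↔
      ∃ U, G.PotCocycle F U ∧ G.crossing U f ∧ ∀ g, G.crossing U g → f ≤ g := by
  constructor
  · rintro ⟨C, ⟨-, U, hC, hF⟩, hfC, hmin⟩
    exact ⟨U, fun g hg => hF g ((hC g).mpr hg), (hC f).mp hfC,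
      fun g hg => hmin g ((hC g).mpr hg)⟩
  · rintro ⟨U, hF, hfU, hmin⟩
    obtain ⟨U', hcut, hfU', hsub⟩ := exists_isCut_subset_crossing hfU
    refine ⟨_, ⟨hcut, U', fun _ => Iff.rfl, fun g hg => ?_⟩, hfU',
      fun g hg => hmin g (hsub g hg).1⟩
    obtain ⟨hgU, hside⟩ := hsub g hg
    rw [hside]
    exact hF g hgU

lemma ncard_sep_mem_eq_sum [Fintype V] [Finite E] (C : Set E) (φ : E → V) (W : Set V) :
    {g ∈ C | φ g ∈ W}.ncard = ∑ v ∈ W.toFinset, {g ∈ C | φ g = v}.ncard := by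
  classical
  have := Fintype.ofFinite E
  simp only [Set.ncard_eq_toFinset_card', Set.toFinset_ofPred]
  rw [Finset.card_eq_sum_card_fiberwise (f := φ) (t := W.toFinset) (fun g hg => by simp_all)]
  refine Finset.sum_congr rfl fun v hv => congrArg Finset.card ?_
  ext g
  simp only [Finset.mem_filter, Finset.mem_univ, true_and]
  exact ⟨fun ⟨⟨hg, _⟩, hv⟩ => ⟨hg, hv⟩,
    fun ⟨hg, hv'⟩ => ⟨⟨hg, hv' ▸ Set.mem_toFinset.mp hv⟩, hv'⟩⟩

variable (G) in
def IsBalanced (dir : E → Bool) (C : Set E) : Prop :=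
  ∀ v : V, {e ∈ C | G.ohead dir e = v}.ncard = {e ∈ C | G.otail dir e = v}.ncard

lemma IsBalanced.ncard_ohead_mem [Fintype V] [Finite E] {dir : E → Bool} {C : Set E}
    (hC : G.IsBalanced dir C) (W : Set V) :
    {g ∈ C | G.ohead dir g ∈ W}.ncard = {g ∈ C | G.otail dir g ∈ W}.ncard := by
  rw [ncard_sep_mem_eq_sum, ncard_sep_mem_eq_sum]
  exact Finset.sum_congr rfl fun v _ => hC v

lemma crossing_iff_ohead_otail (dir : E → Bool) {U : Set V} {g : E} :
    G.crossing U g ↔ (G.ohead dir g ∈ U ↔ G.otail dir g ∉ U) := by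
  unfold crossing ohead otail
  split_ifs <;> tauto

/-- A balanced set enters `U` as often as it leaves it. -/
lemma IsBalanced.ncard_crossing_inter_ne_one [Fintype V] [Finite E] {dir : E → Bool}
    {C : Set E} (hC : G.IsBalanced dir C) (U : Set V) :
    ({g | G.crossing U g} ∩ C).ncard ≠ 1 := by
  set both := {g ∈ C | G.ohead dir g ∈ U ∧ G.otail dir g ∈ U}
  set into := {g ∈ C | G.ohead dir g ∈ U ∧ G.otail dir g ∉ U}
  set out := {g ∈ C | G.otail dir g ∈ U ∧ G.ohead dir g ∉ U}
  have hin : {g ∈ C | G.ohead dir g ∈ U} = both ∪ into := by ext; simp [both, into]; tauto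
  have hout : {g ∈ C | G.otail dir g ∈ U} = both ∪ out := by ext; simp [both, out]; tauto
  have hcross : {g | G.crossing U g} ∩ C = into ∪ out := by
    ext g; simp [into, out, crossing_iff_ohead_otail dir]; tauto
  have hcount := hC.ncard_ohead_mem U
  rw [hin, hout, Set.ncard_union_eq (Set.disjoint_left.mpr fun _ h h' => h'.2.2 h.2.2),
    Set.ncard_union_eq (Set.disjoint_left.mpr fun _ h h' => h'.2.2 h.2.1)] at hcount
  rw [hcross, Set.ncard_union_eq (Set.disjoint_left.mpr fun _ h h' => h'.2.2 h.2.1)]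
  omega

variable (G) in
def IsDirWalk (dir : E → Bool) : V → List E → V → Prop
  | a, [], b => a = b
  | a, g :: l, b => G.otail dir g = a ∧ IsDirWalk dir (G.ohead dir g) l b

section DirWalk

variable {dir : E → Bool} {a b c : V}

@[simp] lemma isDirWalk_nil : G.IsDirWalk dir a [] b ↔ a = b := Iff.rfl

lemma IsDirWalk.append {l m : List E} (hl : G.IsDirWalk dir a l b)
    (hm : G.IsDirWalk dir b m c) : G.IsDirWalk dir a (l ++ m) c := by
  induction l generalizing a with
  | nil => rw [isDirWalk_nil] at hl; subst hl; exact hm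
  | cons g l ih => exact ⟨hl.1, ih hl.2⟩

lemma IsDirWalk.of_append_cons {l₁ l₂ : List E} {g : E}
    (h : G.IsDirWalk dir a (l₁ ++ g :: l₂) b) :
    G.IsDirWalk dir a l₁ (G.otail dir g) ∧ G.IsDirWalk dir (G.ohead dir g) l₂ b := by
  induction l₁ generalizing a with
  | nil => exact ⟨h.1.symm, h.2⟩
  | cons g' l ih => exact ⟨⟨h.1, (ih h.2).1⟩, (ih h.2).2⟩

lemma IsDirWalk.map_otail {l : List E} (h : G.IsDirWalk dir a l b) :
    l.map (G.otail dir) ++ [b] = a :: l.map (G.ohead dir) := by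
  induction l generalizing a with
  | nil => rw [isDirWalk_nil] at h; subst h; rfl
  | cons g l ih => simpa [h.1] using ih h.2

lemma IsDirWalk.invariant {l : List E} (h : G.IsDirWalk dir a l b) {P : V → Prop} (ha : P a)
    (hP : ∀ g ∈ l, P (G.otail dir g) → P (G.ohead dir g)) :
    P b ∧ ∀ g ∈ l, P (G.otail dir g) := by
  induction l generalizing a with
  | nil => rw [isDirWalk_nil] at h; exact ⟨h ▸ ha, by simp⟩
  | cons g l ih =>
      have hg : P (G.otail dir g) := h.1 ▸ ha
      obtain ⟨hb, hl⟩ := ih h.2 (hP g (by simp) hg) fun g' hg' => hP g' (by simp [hg'])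
      exact ⟨hb, by simpa [hg] using hl⟩

lemma IsDirWalk.exists_nodup {l : List E} (h : G.IsDirWalk dir a l b) :
    ∃ l' ⊆ l, G.IsDirWalk dir a l' b ∧ (a :: l'.map (G.ohead dir)).Nodup := by
  induction l generalizing a with
  | nil => exact ⟨[], by simp, h, by simp⟩
  | cons g l ih =>
      obtain ⟨l', hl', hw, hnd⟩ := ih h.2
      set w := g :: l'
      have hww : G.IsDirWalk dir a w b := ⟨h.1, hw⟩
      have hwl : w ⊆ g :: l := List.cons_subset_cons g hl'
      have hwnd : (w.map (G.ohead dir)).Nodup := hnd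
      by_cases ha : a ∈ w.map (G.ohead dir)
      · obtain ⟨g', hg', rfl⟩ := List.mem_map.mp ha
        obtain ⟨r₁, r₂, hr⟩ := List.append_of_mem hg'
        rw [hr] at hww hwnd hwl
        refine ⟨r₂, fun x hx => hwl (by simp [hx]), hww.of_append_cons.2, ?_⟩
        exact hwnd.sublist (by simp)
      · exact ⟨w, hwl, hww, List.nodup_cons.mpr ⟨ha, hwnd⟩⟩

end DirWalk

lemma ncard_sep_mem_list {l : List E} (hl : l.Nodup) (P : E → Prop) [DecidablePred P] :
    {g ∈ {g | g ∈ l} | P g}.ncard = l.countP P := by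
  classical
  rw [show {g ∈ {g | g ∈ l} | P g} = ↑(l.filter P).toFinset by ext; simp,
    Set.ncard_coe_finset, List.toFinset_card_of_nodup (hl.filter _),
    List.countP_eq_length_filter]

section ClosedWalk

variable {dir : E → Bool} {t : V} {l : List E}

lemma IsDirWalk.perm_map_otail (h : G.IsDirWalk dir t l t) :
    (l.map (G.otail dir)).Perm (l.map (G.ohead dir)) :=
  (h.map_otail ▸ List.perm_append_singleton t _).cons_inv.symm

lemma IsDirWalk.isBalanced (h : G.IsDirWalk dir t l t) (hl : l.Nodup) :
    G.IsBalanced dir {g | g ∈ l} := by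
  classical
  intro v
  rw [ncard_sep_mem_list hl, ncard_sep_mem_list hl]
  simpa [List.countP_map, Function.comp_def] using h.perm_map_otail.countP_eq (· = v) |>.symm

lemma IsDirWalk.exists_ohead_eq_otail (h : G.IsDirWalk dir t l t) {S : Set E} {x₀ g₀ : E}
    (hx₀ : x₀ ∈ S) (hx₀l : x₀ ∈ l) (hg₀ : g₀ ∈ l) (hg₀S : g₀ ∉ S) :
    ∃ x ∈ S, ∃ y ∈ l, y ∉ S ∧ G.ohead dir x = G.otail dir y := by
  by_contra! hclosed
  obtain ⟨r₁, r₂, rfl⟩ := List.append_of_mem hx₀l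
  obtain ⟨h₁, h₂⟩ := h.of_append_cons
  have hstep (y : E) (hy : y ∈ r₁ ++ x₀ :: r₂)
      (hy' : ∃ x ∈ S, G.ohead dir x = G.otail dir y) : y ∈ S := by
    obtain ⟨x, hx, hxy⟩ := hy'
    by_contra hyS
    exact hclosed x hx y hy hyS hxy
  obtain ⟨-, hall⟩ :=
    (h₂.append h₁).invariant (P := fun v => ∃ x ∈ S, G.ohead dir x = v)
    ⟨x₀, hx₀, rfl⟩ fun y hy hPy => ⟨y, hstep y (by simp at hy ⊢; tauto) hPy, rfl⟩
  have hg₀' : g₀ ∈ r₂ ++ r₁ := by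
    have : g₀ ≠ x₀ := fun h => hg₀S (h ▸ hx₀)
    simp at hg₀ ⊢; tauto
  exact hg₀S (hstep g₀ (by simp at hg₀ ⊢; tauto) (hall g₀ hg₀'))

lemma IsDirWalk.isCycle [Fintype V] [Finite E] (h : G.IsDirWalk dir t l t)
    (hnd : (l.map (G.ohead dir)).Nodup) (hne : l ≠ []) : G.IsCycle {g | g ∈ l} := by
  have hbal := h.isBalanced hnd.of_map
  have hhead := List.inj_on_of_nodup_map hnd
  have htail := List.inj_on_of_nodup_map (h.perm_map_otail.nodup_iff.mpr hnd)
  refine ⟨List.exists_mem_of_ne_nil l hne, fun Cu hCu => ?_,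
    fun S hS ⟨x₀, hx₀⟩ hpar => ?_⟩
  · obtain ⟨U, rfl⟩ := exists_eq_crossing_of_isCut hCu
    exact hbal.ncard_crossing_inter_ne_one U
  obtain ⟨g₀, hg₀, hg₀S⟩ := Set.exists_of_ssubset hS
  obtain ⟨x, hxS, y, hy, hyS, hxy⟩ :=
    h.exists_ohead_eq_otail hx₀ (hS.subset hx₀) hg₀ hg₀S
  have hx : x ∈ l := hS.subset hxS
  -- the only edges at the vertex `ohead x` are `x`, entering it, and `y`, leaving it
  have hxU : G.crossing {G.ohead dir x} x := by
    refine (crossing_iff_ohead_otail dir).mpr (iff_of_true rfl fun hxx => hyS ?_)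
    exact htail hx hy (hxx.trans hxy) ▸ hxS
  have honly {g : E} (hgS : g ∈ S) (hg : G.crossing {G.ohead dir x} g) : g = x := by
    rw [crossing_iff_ohead_otail dir] at hg
    by_cases hgx : G.ohead dir g = G.ohead dir x
    · exact hhead (hS.subset hgS) hx hgx
    · have hgy := htail (hS.subset hgS) hy ((not_not.mp (mt hg.mpr hgx)).trans hxy)
      exact absurd (hgy ▸ hgS) hyS
  obtain ⟨U', hcut, hxU', hsub⟩ := exists_isCut_subset_crossing hxU
  refine hpar _ hcut (Set.ncard_eq_one.mpr ⟨x, ?_⟩)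
  ext g
  simp only [Set.mem_inter_iff, Set.mem_ofPred_eq, Set.mem_singleton_iff]
  exact ⟨fun ⟨hg, hgS⟩ => honly hgS (hsub g hg).1, fun hg => hg ▸ ⟨hxU', hxS⟩⟩

end ClosedWalk

lemma IsBalanced.exists_potCycle_subset [Fintype V] [Finite E] {F : E → Bool × Bool}
    {dir : E → Bool} {C : Set E} (hC : G.IsBalanced dir C)
    (hF : ∀ g ∈ C, present F (g, dir g)) {f : E} (hf : f ∈ C) :
    ∃ C' ⊆ C, f ∈ C' ∧ G.PotCycle F C' dir := by
  set R := {v | ∃ l : List E, (∀ g ∈ l, g ∈ C ∧ g ≠ f) ∧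
    G.IsDirWalk dir (G.ohead dir f) l v}
  have hR (g : E) (hgC : g ∈ C) (hgf : g ≠ f) (hg : G.otail dir g ∈ R) :
      G.ohead dir g ∈ R := by
    obtain ⟨l, hl, hw⟩ := hg
    refine ⟨l ++ [g], fun x hx => ?_, hw.append ⟨rfl, rfl⟩⟩
    rcases List.mem_append.mp hx with hx | hx
    exacts [hl x hx, List.mem_singleton.mp hx ▸ ⟨hgC, hgf⟩]
  have hfR : G.otail dir f ∈ R := by
    -- otherwise more edges of `C` would enter `R` than leave it
    by_contra hfR
    have hsub : {g ∈ C | G.otail dir g ∈ R} ⊆ {g ∈ C | G.ohead dir g ∈ R} \ {f} :=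
      fun g ⟨hgC, hg⟩ =>
        have hgf : g ≠ f := fun h => hfR (h ▸ hg)
        ⟨⟨hgC, hR g hgC hgf hg⟩, hgf⟩
    have hlt := Set.ncard_sdiff_singleton_lt_of_mem (a := f) (s := {g ∈ C | G.ohead dir g ∈ R})
      ⟨hf, [], by simp, rfl⟩
    have := Set.ncard_le_ncard hsub
    have := hC.ncard_ohead_mem R
    omega
  obtain ⟨l, hlC, hw⟩ := hfR
  obtain ⟨l', hl', hw', hnd⟩ := hw.exists_nodup
  replace hnd : ((f :: l').map (G.ohead dir)).Nodup := hnd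
  have hC' : {g | g ∈ f :: l'} ⊆ C := by
    rintro g (_ | ⟨_, hg⟩)
    exacts [hf, (hlC g (hl' hg)).1]
  have hcl : G.IsDirWalk dir (G.otail dir f) (f :: l') (G.otail dir f) := ⟨rfl, hw'⟩
  exact ⟨_, hC', List.mem_cons_self, hcl.isCycle hnd (List.cons_ne_nil _ _),
    hcl.isBalanced hnd.of_map, fun g hg => hF g (hC' hg)⟩

lemma exists_potCycle_min_iff [Fintype V] [Finite E] [LinearOrder E] {F : E → Bool × Bool}
    {f : E} :
    (∃ C dir, G.PotCycle F C dir ∧ f ∈ C ∧ ∀ g ∈ C, f ≤ g) ↔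
      ∃ C dir, G.IsBalanced dir C ∧ (∀ g ∈ C, present F (g, dir g)) ∧ f ∈ C ∧
        ∀ g ∈ C, f ≤ g := by
  constructor
  · rintro ⟨C, dir, ⟨-, hC, hF⟩, hf, hmin⟩
    exact ⟨C, dir, hC, hF, hf, hmin⟩
  · rintro ⟨C, dir, hC, hF, hf, hmin⟩
    obtain ⟨C', hC', hf', hpot⟩ := hC.exists_potCycle_subset hF hf
    exact ⟨C', dir, hpot, hf', fun g hg => hmin g (hC' hg)⟩

section Deletion

variable {e : E}

lemma potCocycle_del_iff {F : E → Bool × Bool} (he : F e = (false, false)) {U : Set V} :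
    (G.del e).PotCocycle (fun g => F g.1) U ↔ G.PotCocycle F U := by
  refine ⟨fun h g hg => ?_, fun h g hg => h g.1 hg⟩
  by_cases hge : g = e
  · simp [hge, he]
  · exact h ⟨g, hge⟩ hg

lemma isBalanced_del_iff {dir : E → Bool} {C : Set E} (heC : e ∉ C) :
    (G.del e).IsBalanced (fun g => dir g.1) (Subtype.val ⁻¹' C) ↔ G.IsBalanced dir C := by
  have key (P : E → Prop) :
      {g : {x // x ≠ e} | g ∈ Subtype.val ⁻¹' C ∧ P g.1}.ncard = {x ∈ C | P x}.ncard :=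
    Set.ncard_preimage_of_injective_subset_range (s := {x ∈ C | P x}) Subtype.val_injective
      fun x hx => ⟨⟨x, ne_of_mem_of_not_mem hx.1 heC⟩, rfl⟩
  refine forall_congr' fun v => ?_
  rw [← key (G.ohead dir · = v), ← key (G.otail dir · = v)]
  rfl

lemma exists_potCut_min_del_iff [Finite V] [LinearOrder E] {F : E → Bool × Bool}
    (he : F e = (false, false)) {f : E} (hfe : f ≤ e) (hf : f ≠ e) :
    (∃ C, G.PotCut F C ∧ f ∈ C ∧ ∀ g ∈ C, f ≤ g) ↔
      ∃ C, (G.del e).PotCut (fun g => F g.1) C ∧ ⟨f, hf⟩ ∈ C ∧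
        ∀ g ∈ C, ⟨f, hf⟩ ≤ g := by
  rw [exists_potCut_min_iff, exists_potCut_min_iff]
  refine exists_congr fun U => and_congr (potCocycle_del_iff he).symm (and_congr Iff.rfl ?_)
  exact ⟨fun h g hg => h g.1 hg,
    fun h g hg => if hge : g = e then hge ▸ hfe else h ⟨g, hge⟩ hg⟩

lemma exists_potCycle_min_del_iff [Fintype V] [Finite E] [LinearOrder E]
    {F : E → Bool × Bool} (he : F e = (false, false)) {f : E} (hf : f ≠ e) :
    (∃ C dir, G.PotCycle F C dir ∧ f ∈ C ∧ ∀ g ∈ C, f ≤ g) ↔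
      ∃ C dir, (G.del e).PotCycle (fun g => F g.1) C dir ∧ ⟨f, hf⟩ ∈ C ∧
        ∀ g ∈ C, ⟨f, hf⟩ ≤ g := by
  rw [exists_potCycle_min_iff, exists_potCycle_min_iff]
  have heC {C : Set E} {dir : E → Bool} (hF : ∀ g ∈ C, present F (g, dir g)) : e ∉ C :=
    fun heC => by simpa [present, he] using hF e heC
  constructor
  · rintro ⟨C, dir, hC, hF, hfC, hmin⟩
    exact ⟨_, _, (isBalanced_del_iff (heC hF)).mpr hC, fun g hg => hF g hg, hfC,
      fun g hg => hmin g hg⟩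
  · rintro ⟨C', dir', hC', hF, hfC, hmin⟩
    obtain ⟨dir, rfl⟩ : ∃ dir : E → Bool, dir' = fun g => dir g.1 :=
      ⟨fun x => if h : x = e then false else dir' ⟨x, h⟩, funext fun g => by simp [g.2]⟩
    obtain ⟨C, heC, rfl⟩ : ∃ C, e ∉ C ∧ C' = Subtype.val ⁻¹' C :=
      ⟨Subtype.val '' C', by rintro ⟨g, -, hg⟩; exact g.2 hg,
        (Set.preimage_image_eq _ Subtype.val_injective).symm⟩
    exact ⟨C, dir, (isBalanced_del_iff heC).mp hC',
      fun g hg => hF ⟨g, ne_of_mem_of_not_mem hg heC⟩ hg, hfC,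
      fun g hg => hmin ⟨g, ne_of_mem_of_not_mem hg heC⟩ hg⟩

end Deletion

lemma addDir_subtype {p : E → Prop} [DecidableEq E] [DecidableEq (Subtype p)]
    (F : E → Bool × Bool) (a : Subtype p) (d : Bool) :
    addDir (fun g : Subtype p => F g.1) a d = fun g => addDir F a.1 d g.1 :=
  (Function.update_comp_eq_of_injective F Subtype.val_injective a _).symm

lemma remDir_subtype {p : E → Prop} [DecidableEq E] [DecidableEq (Subtype p)]
    (F : E → Bool × Bool) (a : Subtype p) (d : Bool) :
    remDir (fun g : Subtype p => F g.1) a d = fun g => remDir F a.1 d g.1 :=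
  (Function.update_comp_eq_of_injective F Subtype.val_injective a _).symm

lemma eq_image_val_of_forall_iff {e : E} {S : Set E} {T : Set {x // x ≠ e}} (he : e ∉ S)
    (h : ∀ f (hf : f ≠ e), f ∈ S ↔ ⟨f, hf⟩ ∈ T) : S = Subtype.val '' T := by
  rw [Subtype.coe_image]
  ext f
  exact ⟨fun hfS => ⟨ne_of_mem_of_not_mem hfS he, (h f _).mp hfS⟩,
    fun ⟨hf, hfT⟩ => (h f hf).mpr hfT⟩

end FGraph

theorem unoriented_delete_lemma_general {V E : Type} [Fintype V] [Fintype E]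
    [LinearOrder E] (G : FGraph V E) (σu σb : E → Bool) (e : E)
    (hmax : ∀ f : E, f ≤ e) (hni : ¬ G.IsCut {e})
    (F : E → Bool × Bool) (hun : F e = (false, false)) :
    G.Io F = Subtype.val '' (G.del e).Io (fun f => F f.1) ∧
    G.Iu σu F =
      Subtype.val '' (G.del e).Iu (fun f => σu f.1) (fun f => F f.1) ∧
    G.Lo F = Subtype.val '' (G.del e).Lo (fun f => F f.1) ∧
    G.Lb σb F =
      Subtype.val '' (G.del e).Lb (fun f => σb f.1) (fun f => F f.1) := by
  open FGraph in
  refine ⟨eq_image_val_of_forall_iff ?_ fun f hf => ?_,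
    eq_image_val_of_forall_iff ?_ fun f hf => ?_, eq_image_val_of_forall_iff ?_ fun f hf => ?_,
    eq_image_val_of_forall_iff ?_ fun f hf => ?_⟩
  · exact fun ⟨hor, _⟩ => hor (by rw [hun])
  · exact and_congr Iff.rfl (G.exists_potCut_min_del_iff hun (hmax f) hf)
  · rintro ⟨-, C, hC, heC, hmin⟩
    have hCe : C = {e} :=
      Set.eq_singleton_iff_unique_mem.mpr ⟨heC, fun g hg => le_antisymm (hmax g) (hmin g hg)⟩
    exact hni (hCe ▸ hC.1)
  · refine and_congr Iff.rfl ?_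
    rw [addDir_subtype]
    exact G.exists_potCut_min_del_iff (by rw [addDir, Function.update_of_ne hf.symm, hun])
      (hmax f) hf
  · exact fun ⟨hor, _⟩ => hor (by rw [hun])
  · exact and_congr Iff.rfl (G.exists_potCycle_min_del_iff hun hf)
  · exact fun ⟨hbi, _⟩ => by simp [hun] at hbi
  · refine and_congr Iff.rfl ?_
    rw [remDir_subtype]
    exact G.exists_potCycle_min_del_iff (by rw [remDir, Function.update_of_ne hf.symm, hun]) hf

/-- unoriented case of the key lemma: if the maximum edge `e` is
neither an isthmus nor a loop and `e` is unoriented in the fourientation `O`,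
then `I^o(O) = I^o(O−e)`, `I^u(O) = I^u(O−e)`, `L^o(O) = L^o(O−e)` and
`L^b(O) = L^b(O−e)`. -/
theorem unoriented_delete_lemma {V E : Type} [Fintype V] [Fintype E]
    [LinearOrder E] (G : FGraph V E) (σu σb : E → Bool) (e : E)
    (hmax : ∀ f : E, f ≤ e) (hni : ¬ G.IsCut {e}) (hnl : G.src e ≠ G.tgt e)
    (F : E → Bool × Bool) (hun : F e = (false, false)) :
    G.Io F = Subtype.val '' (G.del e).Io (fun f => F f.1) ∧
    G.Iu σu F =
      Subtype.val '' (G.del e).Iu (fun f => σu f.1) (fun f => F f.1) ∧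
    G.Lo F = Subtype.val '' (G.del e).Lo (fun f => F f.1) ∧
    G.Lb σb F =
      Subtype.val '' (G.del e).Lb (fun f => σb f.1) (fun f => F f.1) :=
  unoriented_delete_lemma_general G σu σb e hmax hni F hun
end

section
/- No edge of a graph G can appear in both a potential cut and a potential cycle of the same fourientation O. -/
open scoped Classical

/-- A multigraph with a fixed reference orientation: each edge `e` has a
source `src e` and a target `tgt e` (the positive direction `e⁺ = (src e, tgt e)`). -/
structure MGraph (V E : Type) where
  src : E → V
  tgt : E → V

namespace MGraph

variable {V E : Type} (G : MGraph V E)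

/-- Two vertices are joined by some edge of `S`. -/
def step (S : Set E) (a b : V) : Prop :=
  ∃ e ∈ S, (G.src e = a ∧ G.tgt e = b) ∨ (G.src e = b ∧ G.tgt e = a)

/-- `κ(S)`: the number of connected components of the spanning subgraph `(V, S)`. -/
noncomputable def kappa (S : Set E) : ℕ :=
  Nat.card (Quot (G.step S))

/-- A cut of `G`: a minimal nonempty edge set whose removal increases the
number of connected components. -/
def IsCut (C : Set E) : Prop :=
  C.Nonempty ∧ G.kappa Cᶜ > G.kappa Set.univ ∧
    ∀ C' : Set E, C' ⊂ C → C'.Nonempty → ¬ (G.kappa C'ᶜ > G.kappa Set.univ)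

/-- A cycle of `G`: a minimal nonempty edge set meeting no cut of `G` in
precisely one element. -/
def IsCycle (C : Set E) : Prop :=
  C.Nonempty ∧ (∀ Cu : Set E, G.IsCut Cu → (Cu ∩ C).ncard ≠ 1) ∧
    ∀ C' : Set E, C' ⊂ C → C'.Nonempty →
      ¬ (∀ Cu : Set E, G.IsCut Cu → (Cu ∩ C').ncard ≠ 1)

/-- Head of edge `e` under orientation `O` (`O e = true` means the reference
direction `src e → tgt e`). -/
def ohead (O : E → Bool) (e : E) : V := if O e then G.tgt e else G.src e

/-- Tail of edge `e` under orientation `O`. -/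
def otail (O : E → Bool) (e : E) : V := if O e then G.src e else G.tgt e

/-- Edge `e` crosses the vertex set `U` (exactly one endpoint in `U`). -/
def crossing (U : Set V) (e : E) : Prop := G.src e ∈ U ↔ G.tgt e ∉ U

/-- A directed cut of the orientation `O`: a cut all of whose edges are
oriented consistently out of some vertex set `U`. -/
def IsDirCut (O : E → Bool) (C : Set E) : Prop :=
  G.IsCut C ∧ ∃ U : Set V, (∀ e, e ∈ C ↔ G.crossing U e) ∧ ∀ e ∈ C, G.otail O e ∈ U

/-- A directed cycle of the orientation `O`: a cycle oriented consistently,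
i.e. in-degree equals out-degree at each vertex within the cycle. -/
def IsDirCycle (O : E → Bool) (C : Set E) : Prop :=
  G.IsCycle C ∧ ∀ v : V,
    {e ∈ C | G.ohead O e = v}.ncard = {e ∈ C | G.otail O e = v}.ncard

section Activities

variable [LinearOrder E]

/-- `Î(S)`: cut active edges of the spanning subgraph `S`. -/
def Iact (S : Set E) : Set E :=
  {e | ∃ C : Set E, G.IsCut C ∧ e ∈ C ∧ (∀ f ∈ C, f ≠ e → f ∉ S) ∧ ∀ f ∈ C, e ≤ f}

/-- `L̂(S)`: cycle active edges of the spanning subgraph `S`. -/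
def Lact (S : Set E) : Set E :=
  {e | ∃ C : Set E, G.IsCycle C ∧ e ∈ C ∧ (∀ f ∈ C, f = e ∨ f ∈ S) ∧ ∀ f ∈ C, e ≤ f}

/-- `I(O)`: cut active edges of the orientation `O`. -/
def Ior (O : E → Bool) : Set E :=
  {e | ∃ C : Set E, G.IsDirCut O C ∧ e ∈ C ∧ ∀ f ∈ C, e ≤ f}

/-- `L(O)`: cycle active edges of the orientation `O`. -/
def Lor (O : E → Bool) : Set E :=
  {e | ∃ C : Set E, G.IsDirCycle O C ∧ e ∈ C ∧ ∀ f ∈ C, e ≤ f}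

end Activities

/-- The Tutte polynomial via the corank-nullity expansion, evaluated in a
commutative ring. -/
noncomputable def tutte [Fintype V] [Fintype E] (R : Type) [CommRing R] (x y : R) : R :=
  ∑ S : Finset E, (x - 1) ^ (G.kappa ↑S - G.kappa Set.univ) *
    (y - 1) ^ (S.card + G.kappa ↑S - Fintype.card V)

/-! ### Fourientations.
A fourientation is `F : E → Bool × Bool`, recording whether `e⁺` resp. `e⁻`
belongs to the fourientation. -/

/-- A potential cut of the fourientation `F`: a directed cut each of whose
edges is unoriented in `F` or oriented in the cut direction (out of `U`). -/
def PotCut (F : E → Bool × Bool) (C : Set E) : Prop :=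
  G.IsCut C ∧ ∃ U : Set V, (∀ e, e ∈ C ↔ G.crossing U e) ∧
    ∀ e ∈ C, (G.src e ∈ U → (F e).2 = false) ∧ (G.src e ∉ U → (F e).1 = false)

/-- A potential cycle of the fourientation `F`, with cyclic direction `dir`:
a consistently directed cycle each of whose edges has its `dir`-direction
present in `F` (so each edge is bioriented or oriented in the cycle direction). -/
def PotCycle (F : E → Bool × Bool) (C : Set E) (dir : E → Bool) : Prop :=
  G.IsCycle C ∧
    (∀ v : V, {e ∈ C | G.ohead dir e = v}.ncard = {e ∈ C | G.otail dir e = v}.ncard) ∧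
    ∀ e ∈ C, (if dir e then (F e).1 else (F e).2) = true

/-- Add the direction `d` of edge `e` to the fourientation `F`. -/
def addDir [DecidableEq E] (F : E → Bool × Bool) (e : E) (d : Bool) : E → Bool × Bool :=
  Function.update F e (if d then (true, (F e).2) else ((F e).1, true))

/-- Remove the direction `d` of edge `e` from the fourientation `F`. -/
def remDir [DecidableEq E] (F : E → Bool × Bool) (e : E) (d : Bool) : E → Bool × Bool :=
  Function.update F e (if d then (false, (F e).2) else ((F e).1, false))

/-- `ᵉO`: toggle the status of the edge `e` in the fourientation `F`. -/
def toggle [DecidableEq E] (F : E → Bool × Bool) (e : E) : E → Bool × Bool :=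
  Function.update F e ((F e).2, (F e).1)

section FourActivities

variable [LinearOrder E]

/-- `I^o(O)`: oriented edges that are minimal in some potential cut. -/
def Io (F : E → Bool × Bool) : Set E :=
  {f | (F f).1 ≠ (F f).2 ∧ ∃ C : Set E, G.PotCut F C ∧ f ∈ C ∧ ∀ g ∈ C, f ≤ g}

/-- `L^o(O)`: oriented edges that are minimal in some potential cycle. -/
def Lo (F : E → Bool × Bool) : Set E :=
  {f | (F f).1 ≠ (F f).2 ∧
    ∃ (C : Set E) (dir : E → Bool), G.PotCycle F C dir ∧ f ∈ C ∧ ∀ g ∈ C, f ≤ g}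

/-- `I^u(O)`: unoriented edges `f` minimal in some potential cut of
`O ∪ {f^{σᵤ(f)}}`. -/
def Iu (σu : E → Bool) (F : E → Bool × Bool) : Set E :=
  {f | F f = (false, false) ∧
    ∃ C : Set E, G.PotCut (addDir F f (σu f)) C ∧ f ∈ C ∧ ∀ g ∈ C, f ≤ g}

/-- `L^b(O)`: bioriented edges `f` minimal in some potential cycle of
`O \ {f^{σ_b(f)}}`. -/
def Lb (σb : E → Bool) (F : E → Bool × Bool) : Set E :=
  {f | F f = (true, true) ∧
    ∃ (C : Set E) (dir : E → Bool),
      G.PotCycle (remDir F f (σb f)) C dir ∧ f ∈ C ∧ ∀ g ∈ C, f ≤ g}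

end FourActivities

/-- The deletion `G − e`. -/
def del (e : E) : MGraph V {f : E // f ≠ e} :=
  ⟨fun f => G.src f.1, fun f => G.tgt f.1⟩

/-- The contraction `G/e`: identify the endpoints of `e` and remove `e`. -/
def contr (e : E) : MGraph (Quot (fun a b => a = G.src e ∧ b = G.tgt e)) {f : E // f ≠ e} :=
  ⟨fun f => Quot.mk _ (G.src f.1), fun f => Quot.mk _ (G.tgt f.1)⟩

/-! ### Potential walks in a fourientation. A walk step is a pair `(e, d)` of an
edge and a chosen direction (`d = true` for the reference direction). -/

/-- Tail of the directed edge `(e, d)`. -/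
def ftail (p : E × Bool) : V := if p.2 then G.src p.1 else G.tgt p.1

/-- Head of the directed edge `(e, d)`. -/
def fhead (p : E × Bool) : V := if p.2 then G.tgt p.1 else G.src p.1

/-- The direction `d` of `e` is present in the fourientation `F`. -/
def present (F : E → Bool × Bool) (p : E × Bool) : Prop :=
  (if p.2 then (F p.1).1 else (F p.1).2) = true

/-- A potential walk of the fourientation `F` from `a` to `b`: each step uses
a direction present in `F` (so each edge is bioriented or oriented
consistently with the walk). -/
def IsPWalk (F : E → Bool × Bool) : V → List (E × Bool) → V → Prop
  | a, [], b => a = b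
  | a, p :: rest, b => G.ftail p = a ∧ present F p ∧ IsPWalk F (G.fhead p) rest b

/-- A potential path: a potential walk visiting pairwise distinct vertices. -/
def IsPPath (F : E → Bool × Bool) (a : V) (w : List (E × Bool)) (b : V) : Prop :=
  G.IsPWalk F a w b ∧ (a :: w.map G.fhead).Nodup

end MGraph

/-! All edges of a potential cut point out of one shore `U`, and a potential cycle only uses
edges in its own cyclic direction, so every edge of the cycle crossing the cut leaves `U`.
Hence the cycle edges with head in `U` form a subset of those with tail in `U`. Summing the
balance condition over the vertices of `U` shows that both sets have the same size, so they
coincide; but an edge of the cut lying on the cycle has its tail in `U` and its head outside. -/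

theorem Set.ncard_sep_mem_eq_of_ncard_fiber_eq {α β : Type*} {s : Set α} (hs : s.Finite)
    {f g : α → β} (hfg : ∀ b, {a ∈ s | f a = b}.ncard = {a ∈ s | g a = b}.ncard)
    (U : Set β) :
    {a ∈ s | f a ∈ U}.ncard = {a ∈ s | g a ∈ U}.ncard := by
  set S := hs.toFinset
  set T := (S.image f ∪ S.image g).filter (· ∈ U)
  have hsum : ∀ h : α → β, (∀ a ∈ s, h a ∈ U → h a ∈ T) →
      {a ∈ s | h a ∈ U}.ncard = ∑ b ∈ T, {a ∈ s | h a = b}.ncard := by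
    intro h hT
    rw [Set.ncard_eq_toFinset_card (hs := hs.sep _),
      Finset.card_eq_sum_card_fiberwise (f := h) (t := T) fun a ha =>
        hT a ((Set.Finite.mem_toFinset _).1 ha).1 ((Set.Finite.mem_toFinset _).1 ha).2]
    refine Finset.sum_congr rfl fun b hb => ?_
    rw [Set.ncard_eq_toFinset_card (hs := hs.sep _)]
    congr 1
    ext a
    simp only [Finset.mem_filter, Set.Finite.mem_toFinset, Set.mem_ofPred_eq]
    constructor
    · rintro ⟨⟨has, -⟩, rfl⟩
      exact ⟨has, rfl⟩
    · rintro ⟨has, rfl⟩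
      exact ⟨⟨has, (Finset.mem_filter.1 hb).2⟩, rfl⟩
  rw [hsum f fun a ha hU => Finset.mem_filter.2
      ⟨Finset.mem_union_left _ (Finset.mem_image_of_mem f (hs.mem_toFinset.2 ha)), hU⟩,
    hsum g fun a ha hU => Finset.mem_filter.2
      ⟨Finset.mem_union_right _ (Finset.mem_image_of_mem g (hs.mem_toFinset.2 ha)), hU⟩]
  exact Finset.sum_congr rfl fun b _ => hfg b

namespace MGraph

variable {V E : Type} (G : MGraph V E)

theorem otail_mem_and_ohead_not_mem_of_crossing {F : E → Bool × Bool} {U : Set V} {f : E}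
    {dir : E → Bool} (hcross : G.crossing U f)
    (hF : (G.src f ∈ U → (F f).2 = false) ∧ (G.src f ∉ U → (F f).1 = false))
    (hpres : (if dir f then (F f).1 else (F f).2) = true) :
    G.otail dir f ∈ U ∧ G.ohead dir f ∉ U := by
  unfold crossing at hcross
  by_cases hsrc : G.src f ∈ U <;> cases hd : dir f <;> simp_all [otail, ohead]

theorem otail_mem_of_ohead_mem {F : E → Bool × Bool} {C : Set E} {U : Set V}
    (hC : ∀ e, e ∈ C ↔ G.crossing U e)
    (hF : ∀ e ∈ C, (G.src e ∈ U → (F e).2 = false) ∧ (G.src e ∉ U → (F e).1 = false))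
    {f : E} {dir : E → Bool} (hpres : (if dir f then (F f).1 else (F f).2) = true)
    (hhead : G.ohead dir f ∈ U) : G.otail dir f ∈ U := by
  by_cases hcross : G.crossing U f
  · exact absurd hhead
      (G.otail_mem_and_ohead_not_mem_of_crossing hcross (hF f ((hC f).2 hcross)) hpres).2
  · unfold crossing at hcross
    cases hd : dir f <;>
      simp only [otail, ohead, hd, Bool.false_eq_true, if_true, if_false] at hhead ⊢ <;> tauto

end MGraph

theorem potCut_potCycle_disjoint_general {V E : Type} [Fintype E]
    (G : MGraph V E) (F : E → Bool × Bool) (C₁ C₂ : Set E) (dir : E → Bool)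
    (h₁ : G.PotCut F C₁) (h₂ : G.PotCycle F C₂ dir) (e : E) (he : e ∈ C₁) :
    e ∉ C₂ := by
  intro he₂
  obtain ⟨-, U, hC₁, hF⟩ := h₁
  obtain ⟨-, hbal, hpres⟩ := h₂
  have hsub : {f ∈ C₂ | G.ohead dir f ∈ U} ⊆ {f ∈ C₂ | G.otail dir f ∈ U} :=
    fun f ⟨hf, hhead⟩ => ⟨hf, G.otail_mem_of_ohead_mem hC₁ hF (hpres f hf) hhead⟩
  have hcard := Set.ncard_sep_mem_eq_of_ncard_fiber_eq (Set.toFinite C₂) hbal U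
  have heq := Set.eq_of_subset_of_ncard_le hsub hcard.ge (Set.toFinite _)
  obtain ⟨htail, hhead⟩ :=
    G.otail_mem_and_ohead_not_mem_of_crossing ((hC₁ e).1 he) (hF e he) (hpres e he₂)
  have : e ∈ {f ∈ C₂ | G.ohead dir f ∈ U} := heq ▸ ⟨he₂, htail⟩
  exact hhead this.2

/-- no edge can appear in both a potential cut and a potential
cycle of the same fourientation. -/
theorem potCut_potCycle_disjoint {V E : Type} [Fintype V] [Fintype E]
    (G : MGraph V E) (F : E → Bool × Bool) (C₁ C₂ : Set E) (dir : E → Bool)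
    (h₁ : G.PotCut F C₁) (h₂ : G.PotCycle F C₂ dir) (e : E) (he : e ∈ C₁) :
    e ∉ C₂ :=
  potCut_potCycle_disjoint_general G F C₁ C₂ dir h₁ h₂ e he
end
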